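/- arXiv:2304.04855 — 7 statements merged into one kernel-verified Lean document; each statement's English description precedes it below -/
import Mathlib

section
/- For every integer k ≥ 2 there is a constant C > 0 such that for all integers q ≥ k and e ≥ 1, every (q,k)-system consisting of e q-cliques has chromatic number at most C · e^{1/k} · q. -/
/-- `𝒜` is a family of `q`-element vertex sets (`q`-cliques) that pairwise share at most `ℓ`
vertices.  The associated `k`-uniform hypergraph (an `ℓ`-`(q,k)`-system) has as edges all
`k`-element subsets of members of `𝒜`. -/
def IsSystem {V : Type*} [DecidableEq V] (ℓ q : ℕ) (𝒜 : Finset (Finset V)) : Prop :=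
  (∀ A ∈ 𝒜, A.card = q) ∧
    ∀ A ∈ 𝒜, ∀ B ∈ 𝒜, A ≠ B → (A ∩ B).card ≤ ℓ

/-- The `k`-uniform hypergraph whose edges are all `k`-element subsets of members of `𝒜`
admits a proper coloring with `n` colors: no edge is monochromatic. -/
def SysColorable {V : Type*} (k n : ℕ) (𝒜 : Finset (Finset V)) : Prop :=
  ∃ χ : V → Fin n, ∀ A ∈ 𝒜, ∀ S ⊆ A, S.card = k → ∃ u ∈ S, ∃ w ∈ S, χ u ≠ χ w


/-!
Colour the vertices uniformly at random with `n = ⌈e^(1/k) q⌉` colours. There are at most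
`e q^k` edges, each monochromatic with probability `n^(1-k)`, so some colouring has at most
`e q^k / n^(k-1) ≤ n` monochromatic edges. Giving one vertex of each of them a fresh colour of
its own yields a proper colouring with at most `2n ≤ 4 e^(1/k) q` colours.
-/

open Finset

section Coloring

variable {V β : Type*}

def IsMonochromatic (χ : V → β) (S : Finset V) : Prop :=
  ∃ c, ∀ v ∈ S, χ v = c

instance [Fintype β] [DecidableEq β] (χ : V → β) : DecidablePred (IsMonochromatic χ) :=
  fun S => by unfold IsMonochromatic; infer_instance

def IsProperColoring (E : Finset (Finset V)) (χ : V → β) : Prop :=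
  ∀ S ∈ E, ∃ u ∈ S, ∃ w ∈ S, χ u ≠ χ w

theorem IsProperColoring.comp {γ : Type*} {E : Finset (Finset V)} {χ : V → β}
    (h : IsProperColoring E χ) {f : β → γ} (hf : f.Injective) : IsProperColoring E (f ∘ χ) :=
  fun S hS => by
    obtain ⟨u, hu, w, hw, huw⟩ := h S hS
    exact ⟨u, hu, w, hw, hf.ne huw⟩

theorem sysColorable_of_isProperColoring [DecidableEq V] {k n : ℕ} {𝒜 : Finset (Finset V)}
    {χ : V → Fin n} (hχ : IsProperColoring (𝒜.biUnion (powersetCard k)) χ) :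
    SysColorable k n 𝒜 :=
  ⟨χ, fun A hA S hSA hS => hχ S (mem_biUnion.2 ⟨A, hA, mem_powersetCard.2 ⟨hSA, hS⟩⟩)⟩

theorem card_monochromatic_colorings [Fintype V] [DecidableEq V] (n : ℕ) {S : Finset V}
    (hS : S.Nonempty) :
    Fintype.card {χ : V → Fin n // IsMonochromatic χ S} = n * n ^ (Fintype.card V - #S) := by
  obtain ⟨s, hs⟩ := hS
  let e : {χ : V → Fin n // IsMonochromatic χ S} ≃ Fin n × (↥Sᶜ → Fin n) :=
    { toFun := fun χ => (χ.1 s, fun v => χ.1 v)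
      invFun := fun p => ⟨fun v => if h : v ∈ S then p.1 else p.2 ⟨v, mem_compl.2 h⟩,
        p.1, fun v hv => dif_pos hv⟩
      left_inv := by
        rintro ⟨χ, c, hc⟩
        ext v
        by_cases hv : v ∈ S <;> simp [hv, hc, hs]
      right_inv := by
        rintro ⟨c, g⟩
        ext v
        · simp [hs]
        · simp [mem_compl.1 v.2] }
  rw [Fintype.card_congr e, Fintype.card_prod, Fintype.card_fun, Fintype.card_coe, card_compl,
    Fintype.card_fin]

theorem exists_card_monochromatic_mul_le [DecidableEq V] {k n : ℕ} (hk : 0 < k) (hn : 0 < n)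
    (E : Finset (Finset V)) (hE : ∀ S ∈ E, #S = k) :
    ∃ χ : V → Fin n, #{S ∈ E | IsMonochromatic χ S} * n ^ (k - 1) ≤ #E := by
  have : NeZero n := ⟨hn.ne'⟩
  set W := E.biUnion id
  have hSW : ∀ S ∈ E, S ⊆ W := fun S hS => subset_biUnion_of_mem id hS
  -- colourings of the finite vertex set `W`, extended arbitrarily to `V`
  let ext : (W → Fin n) → V → Fin n := fun g v => if h : v ∈ W then g ⟨v, h⟩ else 0
  have hmono : ∀ S ∈ E, ∀ g,
      IsMonochromatic (ext g) S ↔ IsMonochromatic g (S.subtype (· ∈ W)) := by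
    intro S hS g
    simp only [IsMonochromatic, mem_subtype, Subtype.forall]
    refine exists_congr fun c => ⟨fun h v hv hvS => ?_, fun h v hvS => ?_⟩
    · simpa [ext, hv] using h v hvS
    · simpa [ext, hSW S hS hvS] using h v (hSW S hS hvS) hvS
  have hcard : ∀ S ∈ E, #{g | IsMonochromatic (ext g) S} * n ^ (k - 1) = n ^ Fintype.card W := by
    intro S hS
    have hSk : #(S.subtype (· ∈ W)) = k := by
      rw [card_subtype, filter_true_of_mem (hSW S hS), hE S hS]
    have hkW : k ≤ Fintype.card W := hSk ▸ card_le_univ _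
    rw [filter_congr fun g _ => hmono S hS g, ← Fintype.card_subtype,
      card_monochromatic_colorings n (card_pos.1 (hSk ▸ hk)), hSk, ← pow_succ', ← pow_add]
    congr 1
    omega
  have hsum : ∑ g, #{S ∈ E | IsMonochromatic (ext g) S} * n ^ (k - 1) = ∑ _ : W → Fin n, #E :=
    calc ∑ g, #{S ∈ E | IsMonochromatic (ext g) S} * n ^ (k - 1)
        = ∑ S ∈ E, #{g | IsMonochromatic (ext g) S} * n ^ (k - 1) := by
          rw [← sum_mul, ← sum_mul]
          exact congrArg (· * n ^ (k - 1))
            (sum_card_bipartiteAbove_eq_sum_card_bipartiteBelow fun g S ↦ IsMonochromatic (ext g) S)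
      _ = ∑ _ : W → Fin n, #E := by
          rw [sum_congr rfl hcard, sum_const, sum_const, card_univ, Fintype.card_fun,
            Fintype.card_fin, smul_eq_mul, smul_eq_mul, mul_comm]
  obtain ⟨g, -, hg⟩ := exists_le_of_sum_le univ_nonempty hsum.le
  exact ⟨ext g, hg⟩

theorem exists_hittingSet [DecidableEq V] (B : Finset (Finset V)) (hB : ∀ S ∈ B, S.Nonempty) :
    ∃ R : Finset V, #R ≤ #B ∧ ∀ S ∈ B, ∃ v ∈ S, v ∈ R := by
  induction B using Finset.induction_on with
  | empty => exact ⟨∅, by simp, by simp⟩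
  | insert S B hSB ih =>
    obtain ⟨R, hRB, hR⟩ := ih fun T hT => hB T (mem_insert_of_mem hT)
    obtain ⟨v, hv⟩ := hB S (mem_insert_self S B)
    refine ⟨insert v R, ?_, ?_⟩
    · rw [card_insert_of_notMem hSB]
      exact (card_insert_le v R).trans (by omega)
    · intro T hT
      rcases mem_insert.1 hT with rfl | hT
      · exact ⟨v, hv, mem_insert_self v R⟩
      · obtain ⟨w, hw, hwR⟩ := hR T hT
        exact ⟨w, hw, mem_insert_of_mem hwR⟩

theorem exists_isProperColoring_of_hits_monochromatic [DecidableEq V] {n : ℕ}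
    {E : Finset (Finset V)} (hE : ∀ S ∈ E, 2 ≤ #S) (χ : V → Fin n) (R : Finset V)
    (hR : ∀ S ∈ E, IsMonochromatic χ S → ∃ v ∈ S, v ∈ R) :
    ∃ χ' : V → Fin (n + #R), IsProperColoring E χ' := by
  let ψ : V → Fin n ⊕ Fin #R := fun v =>
    if h : v ∈ R then .inr (R.equivFin ⟨v, h⟩) else .inl (χ v)
  refine ⟨finSumFinEquiv ∘ ψ, IsProperColoring.comp (fun S hS => ?_) finSumFinEquiv.injective⟩
  by_cases hSR : ∃ v ∈ S, v ∈ R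
  · obtain ⟨v, hvS, hvR⟩ := hSR
    obtain ⟨w, hwS, hwv⟩ := exists_mem_ne (hE S hS) v
    refine ⟨v, hvS, w, hwS, ?_⟩
    by_cases hwR : w ∈ R
    · simp [ψ, hvR, hwR, hwv.symm]
    · simp [ψ, hvR, hwR]
  · obtain ⟨u, huS⟩ : S.Nonempty := card_pos.1 (by have := hE S hS; omega)
    obtain ⟨w, hwS, hwu⟩ : ∃ w ∈ S, χ w ≠ χ u := by
      by_contra! h
      exact hSR (hR S hS ⟨χ u, h⟩)
    have hnR : ∀ v ∈ S, v ∉ R := fun v hv hvR => hSR ⟨v, hv, hvR⟩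
    exact ⟨u, huS, w, hwS, by simp [ψ, hnR u huS, hnR w hwS, hwu.symm]⟩

theorem exists_isProperColoring_of_card_le_pow [DecidableEq V] {k n : ℕ} (hk : 2 ≤ k)
    (hn : 0 < n) (E : Finset (Finset V)) (hE : ∀ S ∈ E, #S = k) (hEn : #E ≤ n ^ k) :
    ∃ χ : V → Fin (2 * n), IsProperColoring E χ := by
  obtain ⟨χ, hχ⟩ := exists_card_monochromatic_mul_le (by omega) hn E hE
  have hmono : #{S ∈ E | IsMonochromatic χ S} ≤ n := by
    refine le_of_mul_le_mul_right ?_ (pow_pos hn (k - 1))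
    calc #{S ∈ E | IsMonochromatic χ S} * n ^ (k - 1) ≤ n ^ k := hχ.trans hEn
      _ = n * n ^ (k - 1) := by rw [← pow_succ']; congr 1; omega
  obtain ⟨R, hRcard, hR⟩ := exists_hittingSet {S ∈ E | IsMonochromatic χ S}
    fun S hS => card_pos.1 (by rw [hE S (mem_filter.1 hS).1]; omega)
  obtain ⟨χ', hχ'⟩ := exists_isProperColoring_of_hits_monochromatic
    (fun S hS => (hE S hS).symm ▸ hk) χ R fun S hS hSχ => hR S (mem_filter.2 ⟨hS, hSχ⟩)
  exact ⟨Fin.castLE (by omega) ∘ χ', hχ'.comp (Fin.castLE_injective _)⟩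

theorem card_biUnion_powersetCard_le [DecidableEq V] {q : ℕ} (k : ℕ)
    (𝒜 : Finset (Finset V)) (h𝒜 : ∀ A ∈ 𝒜, #A = q) :
    #(𝒜.biUnion (powersetCard k)) ≤ #𝒜 * q ^ k :=
  calc #(𝒜.biUnion (powersetCard k)) ≤ ∑ A ∈ 𝒜, #(powersetCard k A) := card_biUnion_le
    _ = #𝒜 * q.choose k := by
      rw [sum_congr rfl fun A hA => by rw [card_powersetCard, h𝒜 A hA], sum_const, smul_eq_mul]
    _ ≤ #𝒜 * q ^ k := Nat.mul_le_mul_left _ (Nat.choose_le_pow q k)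

end Coloring

/-- For every `k ≥ 2` there is `C > 0` such that every `(q,k)`-system (with `q ≥ k`)
consisting of `e ≥ 1` `q`-cliques has chromatic number at most `C · e^(1/k) · q`. -/
theorem stmt2 (k : ℕ) (hk : 2 ≤ k) :
    ∃ C : ℝ, 0 < C ∧
      ∀ (q e : ℕ), k ≤ q → 1 ≤ e →
      ∀ (V : Type) [DecidableEq V] (𝒜 : Finset (Finset V)),
        IsSystem (k - 1) q 𝒜 → 𝒜.card = e →
        ∃ n : ℕ, (n : ℝ) ≤ C * (e : ℝ) ^ ((1 : ℝ) / k) * q ∧ SysColorable k n 𝒜 := by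
  refine ⟨4, by norm_num, fun q e hq he V _ 𝒜 h𝒜 h𝒜e => ?_⟩
  set x : ℝ := (e : ℝ) ^ ((1 : ℝ) / k) * q
  have hx : 1 ≤ x := one_le_mul_of_one_le_of_one_le
    (Real.one_le_rpow (by exact_mod_cast he) (by positivity))
    (by exact_mod_cast (by omega : 1 ≤ q))
  have hxk : x ^ k = e * q ^ k := by
    rw [mul_pow, one_div, Real.rpow_inv_natCast_pow (by positivity) (by omega)]
  have hn : 0 < ⌈x⌉₊ := Nat.ceil_pos.2 (by linarith)
  have hEn : #(𝒜.biUnion (powersetCard k)) ≤ ⌈x⌉₊ ^ k := by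
    have hxn : (e * q ^ k : ℝ) ≤ (⌈x⌉₊ : ℝ) ^ k :=
      hxk ▸ pow_le_pow_left₀ (by linarith) (Nat.le_ceil x) k
    exact (h𝒜e ▸ card_biUnion_powersetCard_le k 𝒜 h𝒜.1).trans (by exact_mod_cast hxn)
  have hE : ∀ S ∈ 𝒜.biUnion (powersetCard k), #S = k := fun S hS => by
    obtain ⟨A, -, hSA⟩ := mem_biUnion.1 hS
    exact (mem_powersetCard.1 hSA).2
  obtain ⟨χ, hχ⟩ := exists_isProperColoring_of_card_le_pow hk hn _ hE hEn
  refine ⟨2 * ⌈x⌉₊, ?_, sysColorable_of_isProperColoring hχ⟩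
  have := Nat.ceil_lt_add_one (by linarith : 0 ≤ x)
  rw [mul_assoc]
  push_cast
  linarith
end

section
/- For all integers q and e with 2 < q < e < q², there exists a graph that is the union of e cliques of size q, any two of which share at most one vertex, whose chromatic number is greater than e/4. -/
namespace Stmt3Aux

open Finset

def tcore (g c s : ℕ) : Finset ℕ := (Finset.range g).image (fun i => (c + s * i) % g + g * i)

def core (g j : ℕ) : Finset ℕ :=
  if j < g then Finset.Ico (g * j) (g * j + g)
  else if j < g + g * g then tcore g ((j - g) % g) ((j - g) / g)
  else ∅

def blk (q g j : ℕ) : Finset ℕ :=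
  core g j ∪ Finset.Ico (g * g + q * j) (g * g + q * j + (q - (core g j).card))

lemma dec_div {g a : ℕ} (hg : 0 < g) (ha : a < g) (i : ℕ) : (a + g * i) / g = i := by
  rw [Nat.add_mul_div_left _ _ hg, Nat.div_eq_of_lt ha, Nat.zero_add]

lemma dec_mod {g a : ℕ} (ha : a < g) (i : ℕ) : (a + g * i) % g = a := by
  rw [Nat.add_mul_mod_self_left, Nat.mod_eq_of_lt ha]

lemma tcore_lt {g c s v : ℕ} (hg : 0 < g) (hv : v ∈ tcore g c s) : v < g * g := by
  simp only [tcore, mem_image, mem_range] at hv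
  obtain ⟨i, hi, rfl⟩ := hv
  have h1 : (c + s * i) % g < g := Nat.mod_lt _ hg
  have h2 : g * (i + 1) ≤ g * g := Nat.mul_le_mul_left g hi
  nlinarith

lemma core_lt {g j v : ℕ} (hg : 0 < g) (hv : v ∈ core g j) : v < g * g := by
  unfold core at hv
  split_ifs at hv with h1 h2
  · rw [mem_Ico] at hv
    have h2 : g * (j + 1) ≤ g * g := Nat.mul_le_mul_left g h1
    nlinarith
  · exact tcore_lt hg hv
  · simp at hv

lemma core_card_le {g j : ℕ} : (core g j).card ≤ g := by
  unfold core
  split_ifs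
  · simp [Nat.card_Ico]
  · exact le_trans Finset.card_image_le (by simp)
  · simp

lemma core_subset_blk {q g j : ℕ} : core g j ⊆ blk q g j := Finset.subset_union_left

lemma blk_card {q g j : ℕ} (hg : 0 < g) (hgq : g < q) : (blk q g j).card = q := by
  have hd : Disjoint (core g j) (Finset.Ico (g * g + q * j) (g * g + q * j + (q - (core g j).card))) := by
    rw [Finset.disjoint_left]
    intro v hv hv2
    have := core_lt hg hv
    rw [mem_Ico] at hv2
    omega
  rw [blk, Finset.card_union_of_disjoint hd, Nat.card_Ico]
  have := core_card_le (g := g) (j := j)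
  omega

lemma blk_lt {q g e j v : ℕ} (hg : 0 < g) (hj : j < e) (hv : v ∈ blk q g j) :
    v < g * g + q * e := by
  have hmul : q * (j + 1) ≤ q * e := Nat.mul_le_mul_left q hj
  have hexp : q * (j + 1) = q * j + q := by ring
  rcases Finset.mem_union.mp hv with h | h
  · have := core_lt hg h; omega
  · rw [mem_Ico] at h
    have : q - (core g j).card ≤ q := Nat.sub_le _ _
    omega

lemma marker_mem {q g j : ℕ} (hgq : g < q) :
    g * g + q * j ∈ blk q g j := by
  apply Finset.mem_union_right
  rw [mem_Ico]
  have := core_card_le (g := g) (j := j)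
  omega

lemma pad_decode {q g j j' : ℕ} (hq : 0 < q)
    (h : g * g + q * j ∈ Finset.Ico (g * g + q * j') (g * g + q * j' + (q - (core g j').card))) :
    j = j' := by
  rw [mem_Ico] at h
  have h1 : q * j' ≤ q * j := by omega
  have h2 : q * j < q * (j' + 1) := by
    have : q * (j' + 1) = q * j' + q := by ring
    have : q - (core g j').card ≤ q := Nat.sub_le _ _
    omega
  have h3 : j' ≤ j := Nat.le_of_mul_le_mul_left h1 hq
  have h4 : j < j' + 1 := Nat.lt_of_mul_lt_mul_left h2
  omega

lemma blk_inj {q g j j' : ℕ} (hg : 0 < g) (hgq : g < q)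
    (h : blk q g j = blk q g j') : j = j' := by
  have hm := marker_mem (q := q) (g := g) (j := j) hgq
  rw [h] at hm
  rcases Finset.mem_union.mp hm with hc | hpad
  · have := core_lt hg hc; omega
  · exact pad_decode (by omega) hpad

lemma blk_inter_subset {q g j j' : ℕ} (hg : 0 < g) (hq : 0 < q) (hjj : j ≠ j') :
    blk q g j ∩ blk q g j' ⊆ core g j ∩ core g j' := by
  intro v hv
  rw [Finset.mem_inter] at hv ⊢
  obtain ⟨hv1, hv2⟩ := hv
  by_cases hlt : v < g * g
  · constructor
    · rcases Finset.mem_union.mp hv1 with h | h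
      · exact h
      · rw [mem_Ico] at h; omega
    · rcases Finset.mem_union.mp hv2 with h | h
      · exact h
      · rw [mem_Ico] at h; omega
  · exfalso
    have h1 : v ∈ Finset.Ico (g * g + q * j) (g * g + q * j + (q - (core g j).card)) := by
      rcases Finset.mem_union.mp hv1 with h | h
      · exact absurd (core_lt hg h) hlt
      · exact h
    have h2 : v ∈ Finset.Ico (g * g + q * j') (g * g + q * j' + (q - (core g j').card)) := by
      rcases Finset.mem_union.mp hv2 with h | h
      · exact absurd (core_lt hg h) hlt
      · exact h
    rw [mem_Ico] at h1 h2
    have e1 : q * j ≤ v - g * g := by omega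
    have e2 : v - g * g < q * (j + 1) := by
      have : q * (j + 1) = q * j + q := by ring
      have : q - (core g j).card ≤ q := Nat.sub_le _ _
      omega
    have e3 : q * j' ≤ v - g * g := by omega
    have e4 : v - g * g < q * (j' + 1) := by
      have : q * (j' + 1) = q * j' + q := by ring
      have : q - (core g j').card ≤ q := Nat.sub_le _ _
      omega
    have : j ≤ j' := by
      have := Nat.lt_of_mul_lt_mul_left (lt_of_le_of_lt e1 e4)
      omega
    have : j' ≤ j := by
      have := Nat.lt_of_mul_lt_mul_left (lt_of_le_of_lt e3 e2)
      omega
    omega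

lemma core_eq_group {g j : ℕ} (h : j < g) : core g j = Finset.Ico (g * j) (g * j + g) := by
  simp [core, h]

lemma core_eq_tcore {g j : ℕ} (h1 : g ≤ j) (h2 : j < g + g * g) :
    core g j = tcore g ((j - g) % g) ((j - g) / g) := by
  simp [core, Nat.not_lt_of_ge h1, h2]

lemma core_eq_empty {g j : ℕ} (h2 : ¬ j < g + g * g) : core g j = ∅ := by
  have : ¬ j < g := by omega
  simp [core, this, h2]

lemma mem_group_struct {g j a : ℕ} (hg : 0 < g) (h : a ∈ Finset.Ico (g * j) (g * j + g)) :
    a / g = j ∧ a % g = a - g * j := by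
  rw [mem_Ico] at h
  have ha : a = (a - g * j) + g * j := by omega
  have hlt : a - g * j < g := by omega
  have hd := dec_div hg hlt j
  have hm := dec_mod hlt j
  rw [← ha] at hd hm
  exact ⟨hd, hm⟩

lemma mem_tcore_struct {g c s v : ℕ} (hg : 0 < g) (hv : v ∈ tcore g c s) :
    v / g < g ∧ (c + s * (v / g)) % g = v % g := by
  simp only [tcore, mem_image, mem_range] at hv
  obtain ⟨i, hi, rfl⟩ := hv
  have hm : (c + s * i) % g < g := Nat.mod_lt _ hg
  rw [dec_div hg hm, dec_mod hm]
  exact ⟨hi, rfl⟩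

lemma mem_tcore_of {g c s i v : ℕ} (hi : i < g) (hval : (c + s * i) % g + g * i = v) :
    v ∈ tcore g c s := by
  simp only [tcore, mem_image, mem_range]
  exact ⟨i, hi, hval⟩

lemma tcore_unique {g c s c' s' : ℕ} (hp : g.Prime)
    (hc : c < g) (hs : s < g) (hc' : c' < g) (hs' : s' < g)
    (hne : ¬(c = c' ∧ s = s'))
    {i i' : ℕ} (hi : i < g) (hi' : i' < g)
    (e1 : (c + s * i) % g = (c' + s' * i) % g)
    (e2 : (c + s * i') % g = (c' + s' * i') % g) : i = i' := by
  haveI : Fact g.Prime := ⟨hp⟩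
  have z1 : ((c : ZMod g) + s * i) = ((c' : ZMod g) + s' * i) := by
    have := congrArg (fun a : ℕ => (a : ZMod g)) e1
    simpa [ZMod.natCast_mod] using this
  have z2 : ((c : ZMod g) + s * i') = ((c' : ZMod g) + s' * i') := by
    have := congrArg (fun a : ℕ => (a : ZMod g)) e2
    simpa [ZMod.natCast_mod] using this
  by_cases hss : (s : ZMod g) = (s' : ZMod g)
  · exfalso
    have hseq : s = s' := by
      have := congrArg ZMod.val hss
      rwa [ZMod.val_cast_of_lt hs, ZMod.val_cast_of_lt hs'] at this
    have hceq : (c : ZMod g) = (c' : ZMod g) := by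
      rw [hss] at z1
      exact add_right_cancel z1
    have : c = c' := by
      have := congrArg ZMod.val hceq
      rwa [ZMod.val_cast_of_lt hc, ZMod.val_cast_of_lt hc'] at this
    exact hne ⟨this, hseq⟩
  · have hd : (s : ZMod g) - s' ≠ 0 := sub_ne_zero_of_ne hss
    have key : ((s : ZMod g) - s') * i = ((s : ZMod g) - s') * i' := by
      have t1 : ((s : ZMod g) - s') * i = (c' : ZMod g) - c := by
        linear_combination z1
      have t2 : ((s : ZMod g) - s') * i' = (c' : ZMod g) - c := by
        linear_combination z2
      rw [t1, t2]
    have : (i : ZMod g) = i' := mul_left_cancel₀ hd key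
    have := congrArg ZMod.val this
    rwa [ZMod.val_cast_of_lt hi, ZMod.val_cast_of_lt hi'] at this

lemma core_inter_card {g j j' : ℕ} (hp : g.Prime) (hjj : j ≠ j') :
    ((core g j) ∩ (core g j')).card ≤ 1 := by
  have hg : 0 < g := hp.pos
  apply Finset.card_le_one.mpr
  intro a ha b hb
  rw [Finset.mem_inter] at ha hb
  obtain ⟨ha1, ha2⟩ := ha
  obtain ⟨hb1, hb2⟩ := hb
  by_cases hj2 : j < g + g * g
  swap
  · rw [core_eq_empty hj2] at ha1; simp at ha1
  by_cases hj2' : j' < g + g * g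
  swap
  · rw [core_eq_empty hj2'] at ha2; simp at ha2
  by_cases h1 : j < g <;> by_cases h2 : j' < g
  · exfalso
    rw [core_eq_group h1] at ha1
    rw [core_eq_group h2] at ha2
    have d1 := (mem_group_struct hg ha1).1
    have d2 := (mem_group_struct hg ha2).1
    omega
  · -- j group, j' transversal
    rw [core_eq_group h1] at ha1 hb1
    rw [core_eq_tcore (by omega) hj2'] at ha2 hb2
    have da := mem_group_struct hg ha1
    have db := mem_group_struct hg hb1
    have ta := mem_tcore_struct hg ha2
    have tb := mem_tcore_struct hg hb2
    have hma : a % g = ((j' - g) % g + (j' - g) / g * j) % g := by rw [← ta.2, da.1]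
    have hmb : b % g = ((j' - g) % g + (j' - g) / g * j) % g := by rw [← tb.2, db.1]
    have ea : a % g + g * (a / g) = a := Nat.mod_add_div a g
    have eb : b % g + g * (b / g) = b := Nat.mod_add_div b g
    rw [da.1] at ea
    rw [db.1] at eb
    omega
  · -- j transversal, j' group
    rw [core_eq_group h2] at ha2 hb2
    rw [core_eq_tcore (by omega) hj2] at ha1 hb1
    have da := mem_group_struct hg ha2
    have db := mem_group_struct hg hb2
    have ta := mem_tcore_struct hg ha1
    have tb := mem_tcore_struct hg hb1
    have hma : a % g = ((j - g) % g + (j - g) / g * j') % g := by rw [← ta.2, da.1]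
    have hmb : b % g = ((j - g) % g + (j - g) / g * j') % g := by rw [← tb.2, db.1]
    have ea : a % g + g * (a / g) = a := Nat.mod_add_div a g
    have eb : b % g + g * (b / g) = b := Nat.mod_add_div b g
    rw [da.1] at ea
    rw [db.1] at eb
    omega
  · -- both transversal
    rw [core_eq_tcore (by omega) hj2] at ha1 hb1
    rw [core_eq_tcore (by omega) hj2'] at ha2 hb2
    set c := (j - g) % g with hc_def
    set s := (j - g) / g with hs_def
    set c' := (j' - g) % g with hc'_def
    set s' := (j' - g) / g with hs'_def
    have hc : c < g := Nat.mod_lt _ hg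
    have hc' : c' < g := Nat.mod_lt _ hg
    have hs : s < g := by
      rw [hs_def, Nat.div_lt_iff_lt_mul hg]; omega
    have hs' : s' < g := by
      rw [hs'_def, Nat.div_lt_iff_lt_mul hg]; omega
    have hne : ¬(c = c' ∧ s = s') := by
      rintro ⟨hcc, hss⟩
      have e1 : c + g * s = j - g := Nat.mod_add_div _ _
      have e2 : c' + g * s' = j' - g := Nat.mod_add_div _ _
      rw [hcc, hss] at e1
      omega
    have ta := mem_tcore_struct hg ha1
    have tb := mem_tcore_struct hg hb1
    have ta' := mem_tcore_struct hg ha2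
    have tb' := mem_tcore_struct hg hb2
    have hieq : a / g = b / g :=
      tcore_unique hp hc hs hc' hs' hne ta.1 tb.1
        (by rw [ta.2, ta'.2]) (by rw [tb.2, tb'.2])
    have ea : a % g + g * (a / g) = a := Nat.mod_add_div a g
    have eb : b % g + g * (b / g) = b := Nat.mod_add_div b g
    have : a % g = b % g := by
      rw [← ta.2, ← tb.2, hieq]
    rw [hieq] at ea
    omega

lemma valmod {g : ℕ} [NeZero g] (A B : ZMod g) (i x : ℕ) (hx : x < g)
    (hAB : A + B * i = (x : ZMod g)) : (A.val + B.val * i) % g = x := by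
  have hcast : ((A.val + B.val * i : ℕ) : ZMod g) = A + B * i := by
    push_cast [ZMod.natCast_val, ZMod.cast_id]
    ring
  calc (A.val + B.val * i) % g = ((A.val + B.val * i : ℕ) : ZMod g).val := by
        rw [ZMod.val_natCast]
    _ = ((x : ZMod g)).val := by rw [hcast, hAB]
    _ = x := ZMod.val_cast_of_lt hx

lemma cover_trans {g u v : ℕ} (hp : g.Prime) (hu : u < g * g) (hv : v < g * g)
    (hne : u / g ≠ v / g) :
    ∃ c s : ℕ, c < g ∧ s < g ∧ u ∈ tcore g c s ∧ v ∈ tcore g c s := by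
  haveI : Fact g.Prime := ⟨hp⟩
  haveI : NeZero g := ⟨hp.pos.ne'⟩
  have hg : 0 < g := hp.pos
  have hiu : u / g < g := by rw [Nat.div_lt_iff_lt_mul hg]; exact hu
  have hiv : v / g < g := by rw [Nat.div_lt_iff_lt_mul hg]; exact hv
  have hxu : u % g < g := Nat.mod_lt _ hg
  have hxv : v % g < g := Nat.mod_lt _ hg
  set X : ZMod g := ((u % g : ℕ) : ZMod g)
  set Y : ZMod g := ((v % g : ℕ) : ZMod g)
  set I : ZMod g := ((u / g : ℕ) : ZMod g)
  set I' : ZMod g := ((v / g : ℕ) : ZMod g)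
  have hdne : I - I' ≠ 0 := by
    apply sub_ne_zero_of_ne
    intro h
    apply hne
    have := congrArg ZMod.val h
    rwa [ZMod.val_cast_of_lt hiu, ZMod.val_cast_of_lt hiv] at this
  set S : ZMod g := (X - Y) * (I - I')⁻¹ with hS
  set C : ZMod g := X - S * I with hC
  refine ⟨C.val, S.val, ZMod.val_lt C, ZMod.val_lt S, ?_, ?_⟩
  · apply mem_tcore_of hiu
    have h1 : C + S * (u / g : ℕ) = ((u % g : ℕ) : ZMod g) := by
      rw [hC]; ring
    rw [valmod C S (u / g) (u % g) hxu h1]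
    exact Nat.mod_add_div u g
  · apply mem_tcore_of hiv
    have h1 : C + S * (v / g : ℕ) = ((v % g : ℕ) : ZMod g) := by
      have : C + S * I' = X - S * (I - I') := by rw [hC]; ring
      rw [this, hS]
      calc X - (X - Y) * (I - I')⁻¹ * (I - I')
          = X - (X - Y) * ((I - I')⁻¹ * (I - I')) := by ring
        _ = X - (X - Y) * 1 := by rw [inv_mul_cancel₀ hdne]
        _ = Y := by ring
    rw [valmod C S (v / g) (v % g) hxv h1]
    exact Nat.mod_add_div v g

lemma cover {g u v : ℕ} (hp : g.Prime) (hu : u < g * g) (hv : v < g * g) :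
    ∃ j, j < g + g * g ∧ u ∈ core g j ∧ v ∈ core g j := by
  have hg : 0 < g := hp.pos
  by_cases h : u / g = v / g
  · have hiu : u / g < g := by rw [Nat.div_lt_iff_lt_mul hg]; exact hu
    refine ⟨u / g, by omega, ?_, ?_⟩
    · rw [core_eq_group hiu, mem_Ico]
      have h1 : u % g + g * (u / g) = u := Nat.mod_add_div u g
      have h2 : u % g < g := Nat.mod_lt _ hg
      omega
    · rw [core_eq_group hiu, mem_Ico]
      have h1 : v % g + g * (v / g) = v := Nat.mod_add_div v g
      have h2 : v % g < g := Nat.mod_lt _ hg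
      rw [← h] at h1
      omega
  · obtain ⟨c, s, hc, hs, hu', hv'⟩ := cover_trans hp hu hv h
    have hmul : g * (s + 1) ≤ g * g := Nat.mul_le_mul_left g hs
    have hexp : g * (s + 1) = g * s + g := by ring
    refine ⟨g + (c + g * s), by omega, ?_, ?_⟩
    · have e1 : (g + (c + g * s)) - g = c + g * s := by omega
      rw [core_eq_tcore (by omega) (by omega), e1, dec_mod hc, dec_div hg hc]
      exact hu'
    · have e1 : (g + (c + g * s)) - g = c + g * s := by omega
      rw [core_eq_tcore (by omega) (by omega), e1, dec_mod hc, dec_div hg hc]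
      exact hv'

theorem design {q e g : ℕ} (hp : g.Prime) (hgq : g < q) (hge : g + g * g ≤ e) :
    ∃ 𝒜 : Finset (Finset ℕ),
      (∀ A ∈ 𝒜, ∀ w ∈ A, w < g * g + q * e) ∧ IsSystem 1 q 𝒜 ∧ 𝒜.card = e ∧
      ∀ n : ℕ, ∀ χ : ℕ → Fin n,
        (∀ A ∈ 𝒜, ∀ S ⊆ A, S.card = 2 → ∃ u ∈ S, ∃ w ∈ S, χ u ≠ χ w) → g * g ≤ n := by
  have hg : 0 < g := hp.pos
  have hq : 0 < q := by omega
  refine ⟨(Finset.range e).image (blk q g), ?_, ⟨?_, ?_⟩, ?_, ?_⟩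
  · intro A hA w hw
    obtain ⟨j, hj, rfl⟩ := Finset.mem_image.mp hA
    exact blk_lt hg (Finset.mem_range.mp hj) hw
  · intro A hA
    obtain ⟨j, _, rfl⟩ := Finset.mem_image.mp hA
    exact blk_card hg hgq
  · intro A hA B hB hAB
    obtain ⟨j, _, rfl⟩ := Finset.mem_image.mp hA
    obtain ⟨j', _, rfl⟩ := Finset.mem_image.mp hB
    have hne : j ≠ j' := fun h => hAB (by rw [h])
    exact le_trans (Finset.card_le_card (blk_inter_subset hg hq hne)) (core_inter_card hp hne)
  · rw [Finset.card_image_of_injOn (fun j _ j' _ h => blk_inj hg hgq h), Finset.card_range]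
  · intro n χ hχ
    have key : Set.InjOn χ (Finset.range (g * g)) := by
      intro u hu v hv heq
      by_contra hne
      simp only [Finset.coe_range, Set.mem_Iio] at hu hv
      obtain ⟨j, hj, hu', hv'⟩ := cover hp hu hv
      have hA : blk q g j ∈ (Finset.range e).image (blk q g) :=
        Finset.mem_image_of_mem _ (Finset.mem_range.mpr (by omega))
      have hS : ({u, v} : Finset ℕ) ⊆ blk q g j := by
        intro w hw
        rcases Finset.mem_insert.mp hw with rfl | hw
        · exact core_subset_blk hu'
        · rw [Finset.mem_singleton] at hw
          subst hw
          exact core_subset_blk hv'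
      obtain ⟨a, ha, b, hb, hab⟩ := hχ _ hA {u, v} hS (Finset.card_pair hne)
      apply hab
      rcases Finset.mem_insert.mp ha with rfl | ha' <;>
        rcases Finset.mem_insert.mp hb with rfl | hb'
      · rfl
      · rw [Finset.mem_singleton] at hb'; subst hb'; exact heq
      · rw [Finset.mem_singleton] at ha'; subst ha'; exact heq.symm
      · rw [Finset.mem_singleton] at ha' hb'; subst ha'; subst hb'; rfl
    have := Finset.card_le_card_of_injOn (t := (Finset.univ : Finset (Fin n))) χ (fun x _ => Finset.mem_univ (χ x)) key
    simpa using this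

theorem design1 {q e : ℕ} (hq : 0 < q) (he : 0 < e) :
    ∃ 𝒜 : Finset (Finset ℕ),
      (∀ A ∈ 𝒜, ∀ w ∈ A, w < q * e) ∧ IsSystem 1 q 𝒜 ∧ 𝒜.card = e ∧
      ∀ n : ℕ, ∀ χ : ℕ → Fin n,
        (∀ A ∈ 𝒜, ∀ S ⊆ A, S.card = 2 → ∃ u ∈ S, ∃ w ∈ S, χ u ≠ χ w) → q ≤ n := by
  refine ⟨(Finset.range e).image (fun j => Finset.Ico (q * j) (q * j + q)), ?_, ⟨?_, ?_⟩, ?_, ?_⟩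
  · intro A hA w hw
    obtain ⟨j, hj, rfl⟩ := Finset.mem_image.mp hA
    rw [Finset.mem_Ico] at hw
    have : q * (j + 1) ≤ q * e := Nat.mul_le_mul_left q (Finset.mem_range.mp hj)
    have : q * (j + 1) = q * j + q := by ring
    omega
  · intro A hA
    obtain ⟨j, _, rfl⟩ := Finset.mem_image.mp hA
    rw [Nat.card_Ico]; omega
  · intro A hA B hB hAB
    obtain ⟨j, _, rfl⟩ := Finset.mem_image.mp hA
    obtain ⟨j', _, rfl⟩ := Finset.mem_image.mp hB
    have hne : j ≠ j' := fun h => hAB (by rw [h])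
    apply Finset.card_le_one.mpr
    intro a ha b hb
    exfalso
    rw [Finset.mem_inter] at ha
    have d1 := (mem_group_struct hq ha.1).1
    have d2 := (mem_group_struct hq ha.2).1
    omega
  · rw [Finset.card_image_of_injOn, Finset.card_range]
    intro j _ j' _ h
    have h' : Finset.Ico (q * j) (q * j + q) = Finset.Ico (q * j') (q * j' + q) := h
    have hm : q * j ∈ Finset.Ico (q * j) (q * j + q) := by rw [Finset.mem_Ico]; omega
    rw [h'] at hm
    have := (mem_group_struct hq hm).1
    rw [Nat.mul_div_cancel_left j hq] at this
    omega
  · intro n χ hχ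
    have key : Set.InjOn χ (Finset.range q) := by
      intro u hu v hv heq
      by_contra hne
      simp only [Finset.coe_range, Set.mem_Iio] at hu hv
      have hA : Finset.Ico (q * 0) (q * 0 + q) ∈
          (Finset.range e).image (fun j => Finset.Ico (q * j) (q * j + q)) :=
        Finset.mem_image_of_mem _ (Finset.mem_range.mpr he)
      have hS : ({u, v} : Finset ℕ) ⊆ Finset.Ico (q * 0) (q * 0 + q) := by
        intro w hw
        rw [Finset.mem_Ico]
        rcases Finset.mem_insert.mp hw with rfl | hw
        · omega
        · rw [Finset.mem_singleton] at hw; subst hw; omega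
      obtain ⟨a, ha, b, hb, hab⟩ := hχ _ hA {u, v} hS (Finset.card_pair hne)
      apply hab
      rcases Finset.mem_insert.mp ha with rfl | ha' <;>
        rcases Finset.mem_insert.mp hb with rfl | hb'
      · rfl
      · rw [Finset.mem_singleton] at hb'; subst hb'; exact heq
      · rw [Finset.mem_singleton] at ha'; subst ha'; exact heq.symm
      · rw [Finset.mem_singleton] at ha' hb'; subst ha'; subst hb'; rfl
    have := Finset.card_le_card_of_injOn (t := (Finset.univ : Finset (Fin n))) χ (fun x _ => Finset.mem_univ (χ x)) key
    simpa using this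

theorem transport {q e : ℕ} (N : ℕ) (hN : 0 < N) (𝒜 : Finset (Finset ℕ))
    (hbound : ∀ A ∈ 𝒜, ∀ v ∈ A, v < N)
    (hsys : IsSystem 1 q 𝒜) (hcard : 𝒜.card = e)
    (hcol : ∀ n : ℕ, ∀ χ : ℕ → Fin n,
      (∀ A ∈ 𝒜, ∀ S ⊆ A, S.card = 2 → ∃ u ∈ S, ∃ w ∈ S, χ u ≠ χ w) → (e : ℝ) / 4 < n) :
    ∃ 𝒜' : Finset (Finset (Fin N)),
      IsSystem 1 q 𝒜' ∧ 𝒜'.card = e ∧ ∀ n, SysColorable 2 n 𝒜' → (e : ℝ) / 4 < n := by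
  set ι : ℕ → Fin N := fun v => ⟨v % N, Nat.mod_lt v hN⟩ with hι
  have hιval : ∀ v : ℕ, v < N → (ι v : ℕ) = v := fun v hv => Nat.mod_eq_of_lt hv
  refine ⟨𝒜.image (fun A => A.image ι), ⟨?_, ?_⟩, ?_, ?_⟩
  · intro A' hA'
    obtain ⟨A, hA, rfl⟩ := Finset.mem_image.mp hA'
    rw [Finset.card_image_of_injOn]
    · exact hsys.1 A hA
    · intro a ha b hb hab
      have := congrArg Fin.val hab
      rwa [hιval a (hbound A hA a ha), hιval b (hbound A hA b hb)] at this
  · intro A' hA' B' hB' hne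
    obtain ⟨A, hA, rfl⟩ := Finset.mem_image.mp hA'
    obtain ⟨B, hB, rfl⟩ := Finset.mem_image.mp hB'
    have hAB : A ≠ B := fun h => hne (by rw [h])
    have hsub : A.image ι ∩ B.image ι ⊆ (A ∩ B).image ι := by
      intro x hx
      rw [Finset.mem_inter] at hx
      obtain ⟨a, ha, rfl⟩ := Finset.mem_image.mp hx.1
      obtain ⟨b, hb, hba⟩ := Finset.mem_image.mp hx.2
      have : b = a := by
        have := congrArg Fin.val hba
        rwa [hιval b (hbound B hB b hb), hιval a (hbound A hA a ha)] at this
      subst this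
      exact Finset.mem_image_of_mem ι (Finset.mem_inter.mpr ⟨ha, hb⟩)
    calc (A.image ι ∩ B.image ι).card ≤ ((A ∩ B).image ι).card := Finset.card_le_card hsub
      _ ≤ (A ∩ B).card := Finset.card_image_le
      _ ≤ 1 := hsys.2 A hA B hB hAB
  · rw [Finset.card_image_of_injOn, hcard]
    intro A hA B hB hAB
    have recover : ∀ C ∈ 𝒜, (C.image ι).image (fun x : Fin N => (x : ℕ)) = C := by
      intro C hC
      rw [Finset.image_image]
      rw [show ((fun x : Fin N => (x : ℕ)) ∘ ι) = fun v => v % N from rfl]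
      apply Finset.image_congr ?_ |>.trans (Finset.image_id)
      intro v hv
      exact Nat.mod_eq_of_lt (hbound C hC v hv)
    have hAB' : A.image ι = B.image ι := hAB
    rw [← recover A hA, ← recover B hB, hAB']
  · intro n hcolor
    obtain ⟨χ, hχ⟩ := hcolor
    apply hcol n (χ ∘ ι)
    intro A hA S hS hS2
    have hA' : A.image ι ∈ 𝒜.image (fun A => A.image ι) := Finset.mem_image_of_mem _ hA
    have hSsub : S.image ι ⊆ A.image ι := Finset.image_subset_image hS
    have hScard : (S.image ι).card = 2 := by
      rw [Finset.card_image_of_injOn, hS2]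
      intro a ha b hb hab
      have := congrArg Fin.val hab
      rwa [hιval a (hbound A hA a (hS ha)), hιval b (hbound A hA b (hS hb))] at this
    obtain ⟨u', hu', w', hw', huw⟩ := hχ _ hA' (S.image ι) hSsub hScard
    obtain ⟨u, hu, rfl⟩ := Finset.mem_image.mp hu'
    obtain ⟨w, hw, rfl⟩ := Finset.mem_image.mp hw'
    exact ⟨u, hu, w, hw, huw⟩

end Stmt3Aux

open Stmt3Aux in
/-- For `2 < q < e < q²` there is a graph that is the union of `e` `q`-cliques pairwise
sharing at most one vertex (a `(q,2)`-system) with chromatic number greater than `e/4`. -/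
theorem stmt3 (q e : ℕ) (h1 : 2 < q) (h2 : q < e) (h3 : e < q ^ 2) :
    ∃ (N : ℕ) (𝒜 : Finset (Finset (Fin N))),
      IsSystem 1 q 𝒜 ∧ 𝒜.card = e ∧
      ∀ n : ℕ, SysColorable 2 n 𝒜 → (e : ℝ) / 4 < n := by
  by_cases hcase : e < 4 * q
  · have hq : 0 < q := by omega
    have he : 0 < e := by omega
    obtain ⟨𝒜, hbound, hsys, hcard, hcol⟩ := design1 (q := q) (e := e) hq he
    obtain ⟨𝒜', hh1, hh2, hh3⟩ :=
      transport (q * e) (Nat.mul_pos hq he) 𝒜 hbound hsys hcard (by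
        intro n χ hχ
        have hn := hcol n χ hχ
        rw [div_lt_iff₀ (by norm_num : (0:ℝ) < 4)]
        have : e < n * 4 := by omega
        exact_mod_cast this)
    exact ⟨q * e, 𝒜', hh1, hh2, hh3⟩
  · push_neg at hcase
    have hqq : e < q * q := by rw [pow_two] at h3; exact h3
    set s := Nat.sqrt e with hs
    have hs2 : s * s ≤ e := Nat.sqrt_le e
    have hs3 : e < (s + 1) * (s + 1) := Nat.lt_succ_sqrt e
    have hsq : s < q := Nat.sqrt_lt.mpr hqq
    have hs3' : 3 ≤ s := Nat.le_sqrt.mpr (by omega)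
    obtain ⟨g, hp, hg1, hg2⟩ := Nat.exists_prime_lt_and_le_two_mul (s / 2) (by omega)
    have hgs : g ≤ s - 1 := by
      rcases Nat.lt_or_ge g s with h | h
      · omega
      · exfalso
        have hgeq : g = s := by omega
        have heven : s % 2 = 0 := by omega
        have := (Nat.Prime.even_iff (hgeq ▸ hp)).mp (Nat.even_iff.mpr heven)
        omega
    have hgq : g < q := by omega
    have h4g : e < 4 * (g * g) := by
      have h2g : s + 1 ≤ 2 * g := by omega
      have hmm := Nat.mul_le_mul h2g h2g
      have h44 : (2 * g) * (2 * g) = 4 * (g * g) := by ring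
      omega
    have hge : g + g * g ≤ e := by
      have ht : g ≤ s - 1 := hgs
      set t := s - 1 with htdef
      have hst : s = t + 1 := by omega
      have hmul : g * g ≤ t * t := Nat.mul_le_mul ht ht
      have hexp : (t + 1) * (t + 1) = t * t + 2 * t + 1 := by ring
      rw [hst] at hs2
      omega
    obtain ⟨𝒜, hbound, hsys, hcard, hcol⟩ := design (q := q) (e := e) hp hgq hge
    have hN : 0 < g * g + q * e := by
      have : 0 < q * e := Nat.mul_pos (by omega) (by omega)
      omega
    obtain ⟨𝒜', hh1, hh2, hh3⟩ :=
      transport (g * g + q * e) hN 𝒜 hbound hsys hcard (by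
        intro n χ hχ
        have hn := hcol n χ hχ
        rw [div_lt_iff₀ (by norm_num : (0:ℝ) < 4)]
        have : e < n * 4 := by omega
        exact_mod_cast this)
    exact ⟨g * g + q * e, 𝒜', hh1, hh2, hh3⟩
end

section
/- There is an integer q₀ such that for every prime power q ≥ q₀ and the finite field F_q with q elements, the number of caps in the affine plane F_q² (i.e., subsets of F_q² containing no three collinear points) is less than 2^{6q}. -/
/-- A cap in the affine plane `F²`: a finite set of points no three of which are collinear. -/
def IsCap {F : Type*} [Field F] (S : Finset (F × F)) : Prop :=
  ∀ a ∈ S, ∀ b ∈ S, ∀ c ∈ S, a ≠ b → a ≠ c → b ≠ c →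
    ¬Collinear F ({a, b, c} : Set (F × F))

/-!
Fix a cap `A` with at least `t = ℓ³` points (`ℓ ≈ log₂ q`) and a set `T` of `t` of them. Call two
points outside `T` adjacent when the line through them meets `T`; then `A \ T` is an independent
set of this graph. A line meets the cap `T` in at most two points, and from each point of `T` the
points of a set `C` lie in only `q + 1` directions, so by Cauchy–Schwarz and double counting every
set `C` of more than `2q + 1` points has a vertex adjacent to a `t / (4(q + 1))` fraction of `C`.
Branching on such a vertex (in the independent set or not) shrinks `C` by that factor on one side
and by one point on the other, so `C` has at most `2^(2q + 1) (|C| + 1)^k` independent subsets,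
where `k ≈ (q / t) log q` rounds of shrinking exhaust the `q²` points. Summing over the choices of
`T` leaves `2^(2q + O(q / log q))` caps.
-/

open Finset

theorem Finset.sq_card_le_card_image_mul_card_filter_eq {α β : Type*} [DecidableEq α]
    [DecidableEq β] (s : Finset α) (f : α → β) :
    #s ^ 2 ≤ #(s.image f) * #{p ∈ s ×ˢ s | f p.1 = f p.2} := by
  have hmaps : ∀ p ∈ {p ∈ s ×ˢ s | f p.1 = f p.2}, f p.1 ∈ s.image f := fun p hp =>
    mem_image_of_mem f (mem_product.1 (mem_filter.1 hp).1).1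
  have hpairs : #{p ∈ s ×ˢ s | f p.1 = f p.2} = ∑ b ∈ s.image f, #{a ∈ s | f a = b} ^ 2 := by
    rw [card_eq_sum_card_fiberwise hmaps]
    refine sum_congr rfl fun b _ => ?_
    rw [sq, ← card_product]
    congr 1
    ext p
    simp only [mem_filter, mem_product]
    constructor
    · rintro ⟨⟨⟨h1, h2⟩, h12⟩, rfl⟩
      exact ⟨⟨h1, rfl⟩, h2, h12.symm⟩
    · rintro ⟨⟨h1, rfl⟩, h2, h12⟩
      exact ⟨⟨⟨h1, h2⟩, h12.symm⟩, rfl⟩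
  rw [hpairs, card_eq_sum_card_image f s]
  exact sq_sum_le_card_mul_sum_sq

theorem Finset.card_filter_powerset_card_lt_le {α : Type*} [DecidableEq α] (s : Finset α)
    (t : ℕ) : #{A ∈ s.powerset | #A < t} ≤ t * (#s + 1) ^ t := by
  have hsub : {A ∈ s.powerset | #A < t} ⊆ (range t).biUnion s.powersetCard := by
    intro A hA
    rw [mem_filter, mem_powerset] at hA
    exact mem_biUnion.2 ⟨#A, mem_range.2 hA.2, mem_powersetCard.2 ⟨hA.1, rfl⟩⟩
  calc _ ≤ ∑ j ∈ range t, #(s.powersetCard j) := (card_le_card hsub).trans card_biUnion_le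
    _ ≤ ∑ _j ∈ range t, (#s + 1) ^ t := sum_le_sum fun j hj => by
        rw [card_powersetCard]
        calc (#s).choose j ≤ #s ^ j := Nat.choose_le_pow _ _
          _ ≤ (#s + 1) ^ j := by gcongr; omega
          _ ≤ (#s + 1) ^ t := Nat.pow_le_pow_right (by omega) (mem_range.1 hj).le
    _ = t * (#s + 1) ^ t := by rw [sum_const, card_range, smul_eq_mul]

namespace SimpleGraph

variable {V : Type*} [DecidableEq V] (G : SimpleGraph V) [DecidableRel G.Adj]

def indepSubsets (U : Finset V) : Finset (Finset V) :=
  {I ∈ U.powerset | G.IsIndepSet (I : Finset V)}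

variable {G}

theorem mem_indepSubsets {U I : Finset V} :
    I ∈ G.indepSubsets U ↔ I ⊆ U ∧ G.IsIndepSet (I : Set V) := by
  rw [indepSubsets, mem_filter, mem_powerset]

variable (G)

theorem card_erase_filter_not_adj_add {U : Finset V} {v : V} (hv : v ∈ U) :
    #{w ∈ U.erase v | ¬G.Adj v w} + #{w ∈ U | G.Adj v w} + 1 = #U := by
  have : {w ∈ U.erase v | G.Adj v w} = {w ∈ U | G.Adj v w} := by
    ext w
    simp only [mem_filter, mem_erase]
    exact ⟨fun h => ⟨h.1.2, h.2⟩, fun h => ⟨⟨(G.ne_of_adj h.2).symm, h.1⟩, h.2⟩⟩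
  have hsplit := card_filter_add_card_filter_not (s := U.erase v) (p := fun w => G.Adj v w)
  rw [this] at hsplit
  have := card_erase_add_one hv
  omega

-- An independent set either avoids `v`, or consists of `v` and an independent set of
-- non-neighbours of `v`.
theorem card_indepSubsets_le_add (U : Finset V) (v : V) :
    #(G.indepSubsets U) ≤
      #(G.indepSubsets (U.erase v)) + #(G.indepSubsets {w ∈ U.erase v | ¬G.Adj v w}) := by
  rw [← card_filter_add_card_filter_not (p := fun I => v ∉ I)]
  refine add_le_add (card_le_card fun I hI => ?_)
    ((card_le_card fun I hI => ?_).trans (card_image_le (f := insert v)))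
  · rw [mem_filter, mem_indepSubsets] at hI
    exact mem_indepSubsets.2 ⟨subset_erase.2 ⟨hI.1.1, hI.2⟩, hI.1.2⟩
  · rw [mem_filter, mem_indepSubsets, not_not] at hI
    obtain ⟨⟨hIU, hI⟩, hvI⟩ := hI
    refine mem_image.2 ⟨I.erase v, mem_indepSubsets.2 ⟨fun w hw => ?_, hI.mono (by simp)⟩,
      insert_erase hvI⟩
    obtain ⟨hwv, hwI⟩ := mem_erase.1 hw
    exact mem_filter.2 ⟨mem_erase.2 ⟨hwv, hIU hwI⟩, hI hvI hwI hwv.symm⟩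

-- `hk` says that `k` rounds of shrinking by the factor `1 - t / D` take `#U` below `m + 1`.
theorem card_indepSubsets_le {t D m : ℕ} (hD : 0 < D) (U : Finset V)
    (hsat : ∀ C ⊆ U, m < #C → ∃ v ∈ C, t * #C ≤ D * #{w ∈ C | G.Adj v w})
    {k : ℕ} (hk : (D - t) ^ k * #U < (m + 1) * D ^ k) :
    #(G.indepSubsets U) ≤ 2 ^ m * (#U + 1) ^ k := by
  induction U using Finset.strongInduction generalizing k with
  | H U ih =>
  by_cases hUm : #U ≤ m
  · calc #(G.indepSubsets U) ≤ #U.powerset := card_filter_le _ _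
      _ = 2 ^ #U := card_powerset U
      _ ≤ 2 ^ m := Nat.pow_le_pow_right two_pos hUm
      _ ≤ 2 ^ m * (#U + 1) ^ k := Nat.le_mul_of_pos_right _ (by positivity)
  obtain ⟨v, hvU, hdeg⟩ := hsat U Subset.rfl (by omega)
  obtain ⟨k, rfl⟩ : ∃ k', k = k' + 1 :=
    Nat.exists_eq_succ_of_ne_zero (by rintro rfl; simp at hk; omega)
  have hcard := G.card_erase_filter_not_adj_add hvU
  set U' := {w ∈ U.erase v | ¬G.Adj v w}
  have hU'U : U' ⊂ U :=
    Finset.ssubset_of_subset_of_ssubset (filter_subset _ _) (erase_ssubset hvU)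
  have hshrink : D * #U' ≤ (D - t) * #U := by
    have := congrArg (D * ·) hcard
    simp only [mul_add, mul_one] at this
    rw [Nat.sub_mul]
    omega
  have h_out : #(G.indepSubsets (U.erase v)) ≤ 2 ^ m * #U ^ (k + 1) := by
    have := ih _ (erase_ssubset hvU) (fun C hC => hsat C (hC.trans (erase_subset v U)))
      (hk.trans_le' (Nat.mul_le_mul_left _ (card_le_card (erase_subset v U))))
    rwa [card_erase_add_one hvU] at this
  have h_in : #(G.indepSubsets U') ≤ 2 ^ m * #U ^ k := by
    have hk' : (D - t) ^ k * #U' < (m + 1) * D ^ k := by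
      refine Nat.lt_of_mul_lt_mul_left (a := D) ?_
      calc D * ((D - t) ^ k * #U') = (D - t) ^ k * (D * #U') := by ring
        _ ≤ (D - t) ^ k * ((D - t) * #U) := Nat.mul_le_mul_left _ hshrink
        _ = (D - t) ^ (k + 1) * #U := by ring
        _ < (m + 1) * D ^ (k + 1) := hk
        _ = D * ((m + 1) * D ^ k) := by ring
    calc _ ≤ 2 ^ m * (#U' + 1) ^ k := ih _ hU'U (fun C hC => hsat C (hC.trans hU'U.subset)) hk'
      _ ≤ 2 ^ m * #U ^ k := by gcongr; exact card_lt_card hU'U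
  calc _ ≤ 2 ^ m * #U ^ (k + 1) + 2 ^ m * #U ^ k :=
        (G.card_indepSubsets_le_add U v).trans (add_le_add h_out h_in)
    _ = 2 ^ m * (#U ^ k * (#U + 1)) := by ring
    _ ≤ 2 ^ m * ((#U + 1) ^ k * (#U + 1)) := by gcongr; omega
    _ = 2 ^ m * (#U + 1) ^ (k + 1) := by ring

end SimpleGraph

section Geometry

variable {F : Type*} [Field F]

open scoped Classical

theorem collinear_of_span_sub_eq {V : Type*} [AddCommGroup V] [Module F V] {c c' t : V}
    (h : (F ∙ (c - t)) = F ∙ (c' - t)) : Collinear F ({c, c', t} : Set V) := by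
  obtain ⟨a, ha⟩ :=
    Submodule.mem_span_singleton.1 (h ▸ Submodule.mem_span_singleton_self (c - t))
  rw [collinear_iff_of_mem (by simp : t ∈ ({c, c', t} : Set V))]
  refine ⟨c' - t, fun p hp => ?_⟩
  simp only [Set.mem_insert_iff, Set.mem_singleton_iff] at hp
  rcases hp with rfl | rfl | rfl
  · exact ⟨a, by rw [ha, vadd_eq_add, sub_add_cancel]⟩
  · exact ⟨1, by rw [one_smul, vadd_eq_add, sub_add_cancel]⟩
  · exact ⟨0, by rw [zero_smul, zero_vadd]⟩

theorem card_image_span_sub_le [Finite F] {t : F × F} {C : Finset (F × F)} (ht : t ∉ C) :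
    #(C.image fun c => F ∙ (c - t)) ≤ Nat.card F + 1 := by
  set dirs : Set (Submodule F (F × F)) := ↑(C.image fun c => F ∙ (c - t))
  have hsub : dirs ⊆ Set.range (Projectivization.submodule (K := F) (V := F × F)) := by
    intro W hW
    obtain ⟨c, hc, rfl⟩ := mem_image.1 hW
    have hct : c - t ≠ 0 := sub_ne_zero.2 fun h => ht (h ▸ hc)
    exact ⟨Projectivization.mk F (c - t) hct, Projectivization.submodule_mk _ _⟩
  calc #(C.image fun c => F ∙ (c - t)) = dirs.ncard := (Set.ncard_coe_finset _).symm
    _ ≤ (Set.range (Projectivization.submodule (K := F) (V := F × F))).ncard :=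
        Set.ncard_le_ncard hsub (Set.finite_range _)
    _ = Nat.card (Projectivization F (F × F)) :=
        Set.ncard_range_of_injective Projectivization.submodule_injective
    _ = Nat.card F + 1 := Projectivization.card_of_finrank_two F (F × F) (by simp)

theorem IsCap.mono {A T : Finset (F × F)} (hA : IsCap A) (hTA : T ⊆ A) : IsCap T :=
  fun a ha b hb c hc => hA a (hTA ha) b (hTA hb) c (hTA hc)

def collinearityGraph (T : Finset (F × F)) : SimpleGraph (F × F) where
  Adj v w := v ≠ w ∧ ∃ t ∈ T, Collinear F ({v, w, t} : Set (F × F))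
  symm := ⟨fun _ _ ⟨hvw, t, ht, h⟩ => ⟨hvw.symm, t, ht, by rwa [Set.insert_comm]⟩⟩
  loopless := ⟨fun _ h => h.1 rfl⟩

@[simp]
theorem collinearityGraph_adj {T : Finset (F × F)} {v w : F × F} :
    (collinearityGraph T).Adj v w ↔ v ≠ w ∧ ∃ t ∈ T, Collinear F ({v, w, t} : Set (F × F)) :=
  Iff.rfl

theorem IsCap.isIndepSet_collinearityGraph_sdiff {A T : Finset (F × F)} (hA : IsCap A)
    (hTA : T ⊆ A) : (collinearityGraph T).IsIndepSet (↑(A \ T) : Set (F × F)) := by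
  intro v hv w hw _ hadj
  obtain ⟨hvw, t, ht, hcol⟩ := collinearityGraph_adj.1 hadj
  simp only [coe_sdiff, Set.mem_sdiff, mem_coe] at hv hw
  exact hA v hv.1 w hw.1 t (hTA ht) hvw (fun h => hv.2 (h ▸ ht)) (fun h => hw.2 (h ▸ ht)) hcol

theorem sq_card_le_card_collinear_pairs [Finite F] {t : F × F} {C : Finset (F × F)}
    (ht : t ∉ C) :
    #C ^ 2 ≤ (Nat.card F + 1) *
      (#{p ∈ C ×ˢ C | p.1 ≠ p.2 ∧ Collinear F ({p.1, p.2, t} : Set (F × F))} + #C) := by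
  have hpairs : {p ∈ C ×ˢ C | (F ∙ (p.1 - t)) = F ∙ (p.2 - t)} ⊆
      {p ∈ C ×ˢ C | p.1 ≠ p.2 ∧ Collinear F ({p.1, p.2, t} : Set (F × F))} ∪ C.diag := by
    intro p hp
    rw [mem_filter] at hp
    by_cases h12 : p.1 = p.2
    · exact mem_union_right _ (mem_diag.2 ⟨(mem_product.1 hp.1).1, h12⟩)
    · exact mem_union_left _ (mem_filter.2 ⟨hp.1, h12, collinear_of_span_sub_eq hp.2⟩)
  calc #C ^ 2 ≤ #(C.image fun c => F ∙ (c - t)) *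
        #{p ∈ C ×ˢ C | (F ∙ (p.1 - t)) = F ∙ (p.2 - t)} :=
        sq_card_le_card_image_mul_card_filter_eq C _
    _ ≤ _ := by
        gcongr
        · exact card_image_span_sub_le ht
        · exact (card_le_card hpairs).trans ((card_union_le _ _).trans_eq (by rw [diag_card]))

theorem IsCap.card_filter_collinear_le_two {T : Finset (F × F)} (hT : IsCap T) {u w : F × F}
    (huw : u ≠ w) : #{t ∈ T | Collinear F ({u, w, t} : Set (F × F))} ≤ 2 := by
  by_contra! h
  obtain ⟨t₁, h₁, t₂, h₂, t₃, h₃, h12, h13, h23⟩ := two_lt_card.1 h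
  simp only [mem_filter] at h₁ h₂ h₃
  have hline {t : F × F} (h : Collinear F ({u, w, t} : Set (F × F))) : t ∈ line[F, u, w] :=
    h.mem_affineSpan_of_mem_of_ne (by simp) (by simp) (by simp) huw
  exact hT t₁ h₁.1 t₂ h₂.1 t₃ h₃.1 h12 h13 h23
    (collinear_triple_of_mem_affineSpan_pair (hline h₁.2) (hline h₂.2) (hline h₃.2))

theorem IsCap.sum_card_collinear_pairs_le {T : Finset (F × F)} (hT : IsCap T)
    (C : Finset (F × F)) :
    ∑ t ∈ T, #{p ∈ C ×ˢ C | p.1 ≠ p.2 ∧ Collinear F ({p.1, p.2, t} : Set (F × F))} ≤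
      2 * ∑ v ∈ C, #{w ∈ C | (collinearityGraph T).Adj v w} := by
  have hpivots (p : (F × F) × (F × F)) :
      #{t ∈ T | p.1 ≠ p.2 ∧ Collinear F ({p.1, p.2, t} : Set (F × F))} ≤
        2 * if (collinearityGraph T).Adj p.1 p.2 then 1 else 0 := by
    split_ifs with hadj <;> rw [collinearityGraph_adj] at hadj
    · refine (card_le_card fun t ht => ?_).trans (hT.card_filter_collinear_le_two hadj.1)
      rw [mem_filter] at ht ⊢
      exact ⟨ht.1, ht.2.2⟩
    · rw [card_eq_zero.2 (filter_eq_empty_iff.2 fun t ht h => hadj ⟨h.1, t, ht, h.2⟩)]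
  calc _ = ∑ p ∈ C ×ˢ C, #{t ∈ T | p.1 ≠ p.2 ∧ Collinear F ({p.1, p.2, t} : Set (F × F))} :=
        sum_card_bipartiteAbove_eq_sum_card_bipartiteBelow _
    _ ≤ ∑ p ∈ C ×ˢ C, 2 * if (collinearityGraph T).Adj p.1 p.2 then 1 else 0 :=
        sum_le_sum fun p _ => hpivots p
    _ = 2 * ∑ v ∈ C, #{w ∈ C | (collinearityGraph T).Adj v w} := by
        simp only [← mul_sum, sum_product, card_filter]

theorem IsCap.exists_card_mul_le_degree [Finite F] {T C : Finset (F × F)} (hT : IsCap T)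
    (hTC : Disjoint T C) (hC : 2 * (Nat.card F + 1) ≤ #C) :
    ∃ v ∈ C, #T * #C ≤ 4 * (Nat.card F + 1) * #{w ∈ C | (collinearityGraph T).Adj v w} := by
  set q := Nat.card F
  set P := fun t : F × F =>
    #{p ∈ C ×ˢ C | p.1 ≠ p.2 ∧ Collinear F ({p.1, p.2, t} : Set (F × F))}
  have hlines : #T * #C ^ 2 ≤ (q + 1) * (∑ t ∈ T, P t + #T * #C) := by
    calc #T * #C ^ 2 = ∑ t ∈ T, #C ^ 2 := by rw [sum_const, smul_eq_mul]
      _ ≤ ∑ t ∈ T, (q + 1) * (P t + #C) :=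
        sum_le_sum fun t ht => sq_card_le_card_collinear_pairs (disjoint_left.1 hTC ht)
      _ = (q + 1) * (∑ t ∈ T, P t + #T * #C) := by
        rw [← mul_sum, sum_add_distrib, sum_const, smul_eq_mul]
  have hpivots := hT.sum_card_collinear_pairs_le C
  have hC' : 2 * (q + 1) * (#T * #C) ≤ #T * #C ^ 2 := by
    rw [sq, ← mul_assoc, mul_comm _ #T, mul_assoc]
    gcongr
  have hsum : ∑ _v ∈ C, #T * #C ≤
      ∑ v ∈ C, 4 * (q + 1) * #{w ∈ C | (collinearityGraph T).Adj v w} := by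
    rw [sum_const, smul_eq_mul, ← mul_sum]
    nlinarith
  exact exists_le_of_sum_le (card_pos.1 (by omega)) hsum

end Geometry

theorem add_one_pow_five_le_two_pow {n : ℕ} (hn : 64 ≤ n) : (n + 1) ^ 5 ≤ 2 ^ n := by
  induction n, hn using Nat.le_induction with
  | base => norm_num
  | succ n hn ih =>
    have hstep : 64 ^ 5 * (n + 1 + 1) ^ 5 ≤ 64 ^ 5 * (2 * (n + 1) ^ 5) :=
      calc 64 ^ 5 * (n + 1 + 1) ^ 5 = (64 * (n + 1 + 1)) ^ 5 := (mul_pow _ _ _).symm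
        _ ≤ (65 * (n + 1)) ^ 5 := Nat.pow_le_pow_left (by omega) 5
        _ ≤ 64 ^ 5 * (2 * (n + 1) ^ 5) := by
          rw [mul_pow, ← mul_assoc]; exact Nat.mul_le_mul_right _ (by norm_num)
    calc (n + 1 + 1) ^ 5 ≤ 2 * (n + 1) ^ 5 := Nat.le_of_mul_le_mul_left hstep (by norm_num)
      _ ≤ 2 ^ (n + 1) := (Nat.mul_le_mul_left 2 ih).trans_eq (pow_succ' 2 n).symm

theorem two_mul_sub_pow_le_pow {D t r : ℕ} (hD : 0 < D) (h : D ≤ r * t) :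
    2 * (D - t) ^ r ≤ D ^ r := by
  obtain ⟨r, rfl⟩ : ∃ r', r = r' + 1 := Nat.exists_eq_succ_of_ne_zero (by rintro rfl; omega)
  rcases le_or_gt t D with htD | hDt
  · have hbern := pow_add_mul_le_add_pow (R := ℕ) (a := D - t) (b := t) (Nat.zero_le _)
      (by positivity) (r + 1)
    rw [Nat.sub_add_cancel htD, Nat.add_sub_cancel] at hbern
    have : (D - t) ^ (r + 1) ≤ (r + 1) * (D - t) ^ r * t := by
      calc (D - t) ^ (r + 1) = (D - t) ^ r * (D - t) := pow_succ _ _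
        _ ≤ (D - t) ^ r * ((r + 1) * t) := by gcongr; omega
        _ = (r + 1) * (D - t) ^ r * t := by ring
    push_cast at hbern
    omega
  · simp [Nat.sub_eq_zero_of_le hDt.le]

theorem cap_count_exponent_lt {ℓ q : ℕ} (hℓ : 65 ≤ ℓ) (hq : ℓ ^ 5 ≤ q) :
    2 * ℓ * ℓ ^ 3 + ℓ ^ 3 + (2 * q + 1) + 2 * ℓ * ((4 * (q + 1) / ℓ ^ 3 + 1) * (2 * ℓ)) + 1
      < 6 * q := by
  set x := 4 * (q + 1) / ℓ ^ 3
  have hx : 65 * (ℓ ^ 2 * x) ≤ 4 * (q + 1) :=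
    calc 65 * (ℓ ^ 2 * x) ≤ ℓ * (ℓ ^ 2 * x) := by gcongr
      _ = x * ℓ ^ 3 := by ring
      _ ≤ 4 * (q + 1) := Nat.div_mul_le_self _ _
  have h4 : 65 * ℓ ^ 4 ≤ q := hq.trans' (by rw [pow_succ _ 4, mul_comm]; gcongr)
  have h3 : ℓ ^ 3 ≤ ℓ ^ 4 := Nat.pow_le_pow_right (by omega) (by norm_num)
  have h2 : 4 * ℓ ^ 2 + 2 ≤ ℓ ^ 4 := by nlinarith
  have : 2 * ℓ * ((x + 1) * (2 * ℓ)) = 4 * (ℓ ^ 2 * x) + 4 * ℓ ^ 2 := by ring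
  have : 2 * ℓ * ℓ ^ 3 = 2 * ℓ ^ 4 := by ring
  omega

section Counting

variable {F : Type*} [Field F] [Fintype F]

open scoped Classical

theorem IsCap.card_indepSubsets_collinearityGraph_le {q t k : ℕ} (hq : Fintype.card F = q)
    (hk : (4 * (q + 1) - t) ^ k * q ^ 2 < (2 * q + 2) * (4 * (q + 1)) ^ k)
    {T : Finset (F × F)} (hT : IsCap T) (hTt : #T = t) :
    #((collinearityGraph T).indepSubsets (univ \ T)) ≤ 2 ^ (2 * q + 1) * (q ^ 2 + 1) ^ k := by
  have hU : #(univ \ T) ≤ q ^ 2 := by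
    rw [← hq, sq, ← Fintype.card_prod, ← card_univ]
    exact card_le_card sdiff_subset
  have hnat : Nat.card F = q := by rw [Nat.card_eq_fintype_card, hq]
  refine ((collinearityGraph T).card_indepSubsets_le (t := t) (D := 4 * (q + 1))
    (m := 2 * q + 1) (by omega) (univ \ T) (fun C hC hCm => ?_) ?_).trans (by gcongr)
  · rw [← hTt, ← hnat]
    exact hT.exists_card_mul_le_degree (disjoint_of_subset_right hC disjoint_sdiff_self_right)
      (by omega)
  · calc _ ≤ (4 * (q + 1) - t) ^ k * q ^ 2 := by gcongr
      _ < _ := hk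

theorem filter_isCap_subset (t : ℕ) :
    ({S | IsCap S} : Finset (Finset (F × F))) ⊆
      {A ∈ (univ : Finset (F × F)).powerset | #A < t} ∪
        {T ∈ powersetCard t (univ : Finset (F × F)) | IsCap T}.biUnion fun T =>
          ((collinearityGraph T).indepSubsets (univ \ T)).image (T ∪ ·) := by
  intro A hA
  rw [mem_filter] at hA
  rcases lt_or_ge #A t with hAt | htA
  · exact mem_union_left _ (mem_filter.2 ⟨mem_powerset.2 (subset_univ A), hAt⟩)
  obtain ⟨T, hTA, hTt⟩ := exists_subset_card_eq htA
  refine mem_union_right _ (mem_biUnion.2 ⟨T, ?_, mem_image.2 ⟨A \ T, ?_, ?_⟩⟩)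
  · exact mem_filter.2 ⟨mem_powersetCard.2 ⟨subset_univ T, hTt⟩, hA.2.mono hTA⟩
  · exact SimpleGraph.mem_indepSubsets.2 ⟨sdiff_subset_sdiff (subset_univ A) subset_rfl,
      hA.2.isIndepSet_collinearityGraph_sdiff hTA⟩
  · exact union_sdiff_of_subset hTA

theorem card_caps_le {q t k : ℕ} (hq : Fintype.card F = q)
    (hk : (4 * (q + 1) - t) ^ k * q ^ 2 < (2 * q + 2) * (4 * (q + 1)) ^ k) :
    Nat.card {S : Finset (F × F) // IsCap S} ≤
      t * (q ^ 2 + 1) ^ t + (q ^ 2 + 1) ^ t * (2 ^ (2 * q + 1) * (q ^ 2 + 1) ^ k) := by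
  have hN : #(univ : Finset (F × F)) = q ^ 2 := by rw [card_univ, Fintype.card_prod, hq, sq]
  rw [Nat.card_eq_fintype_card, Fintype.card_subtype]
  calc _ ≤ _ := card_le_card (filter_isCap_subset t)
    _ ≤ _ := card_union_le _ _
    _ ≤ t * (q ^ 2 + 1) ^ t + #(powersetCard t (univ : Finset (F × F))) *
          (2 ^ (2 * q + 1) * (q ^ 2 + 1) ^ k) := by
        gcongr
        · exact hN ▸ card_filter_powerset_card_lt_le univ t
        · refine card_biUnion_le.trans ((sum_le_sum
            (g := fun _ => 2 ^ (2 * q + 1) * (q ^ 2 + 1) ^ k) fun T hT => ?_).trans ?_)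
          · rw [mem_filter, mem_powersetCard] at hT
            exact card_image_le.trans (hT.2.card_indepSubsets_collinearityGraph_le hq hk hT.1.2)
          · rw [sum_const, smul_eq_mul]
            exact Nat.mul_le_mul_right _ (card_le_card (filter_subset _ _))
    _ ≤ _ := by
        gcongr
        rw [card_powersetCard, hN]
        exact (Nat.choose_le_pow _ _).trans (Nat.pow_le_pow_left (by omega) _)

theorem card_caps_lt_two_pow {q : ℕ} (hq : Fintype.card F = q) (hq64 : 2 ^ 64 ≤ q) :
    Nat.card {S : Finset (F × F) // IsCap S} < 2 ^ (6 * q) := by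
  set ℓ := Nat.log 2 q + 1
  have hℓ65 : 65 ≤ ℓ := Nat.succ_le_succ (Nat.le_log_of_pow_le one_lt_two hq64)
  have hℓq : ℓ ^ 5 ≤ q :=
    (add_one_pow_five_le_two_pow (by omega)).trans (Nat.pow_log_le_self 2 (by positivity))
  have hN : q ^ 2 + 1 ≤ 2 ^ (2 * ℓ) := by
    have hqℓ : q + 1 ≤ 2 ^ ℓ := Nat.lt_pow_succ_log_self one_lt_two q
    rw [mul_comm, pow_mul]
    nlinarith
  have hNpow (x : ℕ) : (q ^ 2 + 1) ^ x ≤ 2 ^ (2 * ℓ * x) :=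
    (Nat.pow_le_pow_left hN x).trans_eq (pow_mul _ _ _).symm
  set t := ℓ ^ 3
  set r := 4 * (q + 1) / t + 1
  -- `r` rounds of shrinking by the factor `1 - t / (4(q + 1))` halve a set, and `2ℓ` halvings
  -- take `q²` points below one.
  have hk : (4 * (q + 1) - t) ^ (r * (2 * ℓ)) * q ^ 2 <
      (2 * q + 2) * (4 * (q + 1)) ^ (r * (2 * ℓ)) := by
    have hhalf : 2 * (4 * (q + 1) - t) ^ r ≤ (4 * (q + 1)) ^ r :=
      two_mul_sub_pow_le_pow (by positivity)
        (mul_comm t r ▸ (Nat.lt_mul_div_succ _ (by positivity)).le)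
    calc _ ≤ (4 * (q + 1) - t) ^ (r * (2 * ℓ)) * 2 ^ (2 * ℓ) :=
          Nat.mul_le_mul_left _ (by omega)
      _ ≤ (4 * (q + 1)) ^ (r * (2 * ℓ)) := by
          rw [pow_mul _ r, pow_mul _ r, ← mul_pow, mul_comm]
          exact Nat.pow_le_pow_left hhalf _
      _ < _ := lt_mul_left (by positivity) (by omega)
  calc _ ≤ _ := card_caps_le hq hk
    _ ≤ 2 ^ t * 2 ^ (2 * ℓ * t) +
          2 ^ (2 * ℓ * t) * (2 ^ (2 * q + 1) * 2 ^ (2 * ℓ * (r * (2 * ℓ)))) :=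
        add_le_add (Nat.mul_le_mul Nat.lt_two_pow_self.le (hNpow t))
          (Nat.mul_le_mul (hNpow t) (Nat.mul_le_mul_left _ (hNpow _)))
    _ ≤ 2 ^ (2 * ℓ * t + t + (2 * q + 1) + 2 * ℓ * (r * (2 * ℓ))) * 2 := by
        rw [← pow_add, ← pow_add, ← pow_add, mul_two]
        exact add_le_add (Nat.pow_le_pow_right two_pos (by omega))
          (Nat.pow_le_pow_right two_pos (by omega))
    _ < 2 ^ (6 * q) := by
        rw [← pow_succ]
        exact Nat.pow_lt_pow_right one_lt_two (cap_count_exponent_lt hℓ65 hℓq)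

end Counting

/-- There is `q₀` such that for every prime power `q ≥ q₀` and the finite field `F` with `q`
elements, the number of caps in the affine plane `F²` is less than `2^(6q)`. -/
theorem stmt10 :
    ∃ q₀ : ℕ, ∀ q : ℕ, q₀ ≤ q → IsPrimePow q →
      ∀ (F : Type) [Field F] [Fintype F], Fintype.card F = q →
        Nat.card {S : Finset (F × F) // IsCap S} < 2 ^ (6 * q) :=
  ⟨2 ^ 64, fun _ hq _ _ _ _ hF => card_caps_lt_two_pow hF hq⟩
end

section
/- Let q be a prime power and F_q the finite field with q elements. For every set X of points of F_q² and every set Y of affine lines of F_q², the number e(X,Y) of incident pairs (x, L) with x ∈ X, L ∈ Y and x ∈ L satisfies |e(X,Y) − |X||Y|/q| ≤ √(q·|X|·|Y|). -/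
/-- A subset of the affine plane `F²` is an affine line if it is of the form
`{p + t • v : t ∈ F}` for some point `p` and some nonzero direction `v`. -/
def IsAffineLine {F : Type*} [Field F] (L : Set (F × F)) : Prop :=
  ∃ p v : F × F, v ≠ 0 ∧ L = {x | ∃ t : F, x = p + t • v}

section AuxStmt11
open Finset

variable {F : Type} [Field F] [Fintype F] [DecidableEq F]

lemma line_eq_image {L : Finset (F × F)} (h : IsAffineLine (L : Set (F × F))) :
    ∃ p v : F × F, v ≠ 0 ∧ L = Finset.univ.image (fun t : F => p + t • v) := by
  obtain ⟨p, v, hv, hset⟩ := h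
  refine ⟨p, v, hv, Finset.coe_injective ?_⟩
  rw [hset]
  ext x
  simp [eq_comm]

lemma line_card {L : Finset (F × F)} (h : IsAffineLine (L : Set (F × F))) :
    L.card = Fintype.card F := by
  obtain ⟨p, v, hv, rfl⟩ := line_eq_image h
  rw [Finset.card_image_of_injective _ ?_, Finset.card_univ]
  intro a b hab
  have : a • v = b • v := by
    have := hab; simpa using this
  exact smul_left_injective F hv this

lemma line_through_unique {x y : F × F} (hxy : x ≠ y) :
    ∃! L : Finset (F × F), IsAffineLine (L : Set (F × F)) ∧ x ∈ L ∧ y ∈ L := by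
  refine ⟨Finset.univ.image (fun t : F => x + t • (y - x)), ⟨⟨x, y - x, sub_ne_zero.2 (Ne.symm hxy), ?_⟩, ?_, ?_⟩, ?_⟩
  · ext z; simp [eq_comm]
  · exact Finset.mem_image.2 ⟨0, Finset.mem_univ _, by simp⟩
  · exact Finset.mem_image.2 ⟨1, Finset.mem_univ _, by simp⟩
  · rintro L ⟨⟨p, v, hv, hset⟩, hxL, hyL⟩
    have hx' : (x : F × F) ∈ (L : Set (F × F)) := hxL
    have hy' : (y : F × F) ∈ (L : Set (F × F)) := hyL
    rw [hset] at hx' hy'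
    obtain ⟨t1, rfl⟩ := hx'
    obtain ⟨t2, rfl⟩ := hy'
    have ht : t2 - t1 ≠ 0 := by
      intro h
      obtain rfl : t1 = t2 := (sub_eq_zero.1 h).symm
      exact hxy rfl
    have key : ∀ s : F, (p + t1 • v) + s • ((p + t2 • v) - (p + t1 • v))
        = p + (t1 + s * (t2 - t1)) • v := by
      intro s; module
    apply Finset.coe_injective
    rw [hset]
    ext z
    simp only [Finset.coe_image, Finset.coe_univ, Set.image_univ, Set.mem_range,
      Set.mem_setOf_eq]
    constructor
    · rintro ⟨t, rfl⟩
      refine ⟨(t - t1) / (t2 - t1), ?_⟩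
      rw [key, div_mul_cancel₀ _ ht]
      have h2 : t1 + (t - t1) = t := by ring
      rw [h2]
    · rintro ⟨s, rfl⟩
      exact ⟨t1 + s * (t2 - t1), key s⟩

open scoped Classical in
noncomputable def linesOf (F : Type) [Field F] [Fintype F] [DecidableEq F] :
    Finset (Finset (F × F)) :=
  Finset.univ.filter (fun L => IsAffineLine (L : Set (F × F)))

lemma mem_linesOf {L : Finset (F × F)} :
    L ∈ linesOf F ↔ IsAffineLine (L : Set (F × F)) := by
  classical
  simp [linesOf]

open scoped Classical in
lemma pair_count {x y : F × F} (hxy : x ≠ y) :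
    ((linesOf F).filter (fun L => x ∈ L ∧ y ∈ L)).card = 1 := by
  obtain ⟨L0, ⟨h1, h2, h3⟩, huniq⟩ := line_through_unique hxy
  rw [Finset.card_eq_one]
  refine ⟨L0, ?_⟩
  ext L
  simp only [Finset.mem_filter, mem_linesOf, Finset.mem_singleton]
  constructor
  · rintro ⟨hL, hx, hy⟩; exact huniq L ⟨hL, hx, hy⟩
  · rintro rfl; exact ⟨h1, h2, h3⟩

open scoped Classical in
lemma point_count (x : F × F) :
    ((linesOf F).filter (fun L => x ∈ L)).card = Fintype.card F + 1 := by
  set q := Fintype.card F with hqdef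
  have hq2 : 2 ≤ q := Fintype.one_lt_card
  -- double counting
  have key : ∑ y ∈ Finset.univ.erase x,
      ((linesOf F).filter (fun L => x ∈ L ∧ y ∈ L)).card
      = ((linesOf F).filter (fun L => x ∈ L)).card * (q - 1) := by
    calc ∑ y ∈ Finset.univ.erase x,
        ((linesOf F).filter (fun L => x ∈ L ∧ y ∈ L)).card
        = ∑ y ∈ Finset.univ.erase x, ∑ L ∈ linesOf F,
            (if x ∈ L ∧ y ∈ L then 1 else 0) :=
          Finset.sum_congr rfl (fun y _ => Finset.card_filter _ _)
      _ = ∑ L ∈ linesOf F, ∑ y ∈ Finset.univ.erase x,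
            (if x ∈ L ∧ y ∈ L then 1 else 0) := Finset.sum_comm
      _ = ∑ L ∈ linesOf F, (if x ∈ L then (q - 1) else 0) := by
          refine Finset.sum_congr rfl (fun L hL => ?_)
          by_cases hx : x ∈ L
          · simp only [hx, true_and, if_true]
            have : ∑ y ∈ Finset.univ.erase x, (if y ∈ L then 1 else 0)
                = (L.erase x).card := by
              rw [← Finset.sum_filter, Finset.sum_const, smul_eq_mul, mul_one]
              congr 1
              ext y
              simp [Finset.mem_erase, and_comm]
            rw [this, Finset.card_erase_of_mem hx, line_card (mem_linesOf.1 hL)]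
          · simp [hx]
      _ = ((linesOf F).filter (fun L => x ∈ L)).card * (q - 1) := by
          rw [Finset.card_filter, Finset.sum_mul]
          congr 1
          ext L
          split_ifs <;> simp
  have lhs : ∑ y ∈ Finset.univ.erase x,
      ((linesOf F).filter (fun L => x ∈ L ∧ y ∈ L)).card = q ^ 2 - 1 := by
    rw [Finset.sum_congr rfl (fun y hy => pair_count (Finset.ne_of_mem_erase hy).symm)]
    simp [Finset.card_erase_of_mem, Fintype.card_prod, hqdef, sq]
  rw [lhs] at key
  have h1 : q ^ 2 - 1 = (q + 1) * (q - 1) := by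
    cases' q with q
    · omega
    · simp [Nat.succ_sub_one]; ring_nf; omega
  rw [h1] at key
  exact (Nat.eq_of_mul_eq_mul_right (by omega) key.symm)

open scoped Classical in
lemma sum_inter_card (X : Finset (F × F)) :
    ∑ L ∈ linesOf F, (X ∩ L).card = X.card * (Fintype.card F + 1) := by
  have h1 : ∀ L : Finset (F × F), (X ∩ L).card = ∑ x ∈ X, (if x ∈ L then 1 else 0) := by
    intro L
    rw [← Finset.filter_mem_eq_inter, Finset.card_filter]
  calc ∑ L ∈ linesOf F, (X ∩ L).card
      = ∑ L ∈ linesOf F, ∑ x ∈ X, (if x ∈ L then 1 else 0) :=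
        Finset.sum_congr rfl (fun L _ => h1 L)
    _ = ∑ x ∈ X, ∑ L ∈ linesOf F, (if x ∈ L then 1 else 0) := Finset.sum_comm
    _ = ∑ x ∈ X, (Fintype.card F + 1) := by
        refine Finset.sum_congr rfl (fun x _ => ?_)
        rw [← Finset.card_filter]
        exact point_count x
    _ = X.card * (Fintype.card F + 1) := by rw [Finset.sum_const, smul_eq_mul]

open scoped Classical in
lemma lines_card : (linesOf F).card = Fintype.card F ^ 2 + Fintype.card F := by
  set q := Fintype.card F with hqdef
  have hq2 : 2 ≤ q := Fintype.one_lt_card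
  have h := sum_inter_card (F := F) Finset.univ
  have h2 : ∀ L ∈ linesOf F, (Finset.univ ∩ L).card = q := by
    intro L hL
    rw [Finset.univ_inter]
    exact line_card (mem_linesOf.1 hL)
  rw [Finset.sum_congr rfl h2, Finset.sum_const, smul_eq_mul, Finset.card_univ,
    Fintype.card_prod] at h
  have : (linesOf F).card * q = (q ^ 2 + q) * q := by
    rw [h]; ring
  exact Nat.eq_of_mul_eq_mul_right (by omega) this

open scoped Classical in
lemma sum_inter_card_sq (X : Finset (F × F)) :
    ∑ L ∈ linesOf F, (X ∩ L).card ^ 2 = X.card * (Fintype.card F + X.card) := by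
  set q := Fintype.card F with hqdef
  have h1 : ∀ L : Finset (F × F), (X ∩ L).card = ∑ x ∈ X, (if x ∈ L then 1 else 0) := by
    intro L
    rw [← Finset.filter_mem_eq_inter, Finset.card_filter]
  calc ∑ L ∈ linesOf F, (X ∩ L).card ^ 2
      = ∑ L ∈ linesOf F, ∑ x ∈ X, ∑ y ∈ X, (if x ∈ L ∧ y ∈ L then 1 else 0) := by
        refine Finset.sum_congr rfl (fun L _ => ?_)
        rw [sq, h1 L, Finset.sum_mul_sum]
        refine Finset.sum_congr rfl (fun x _ => Finset.sum_congr rfl (fun y _ => ?_))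
        split_ifs with h h1 h2 <;> simp_all
    _ = ∑ x ∈ X, ∑ y ∈ X, ∑ L ∈ linesOf F, (if x ∈ L ∧ y ∈ L then 1 else 0) := by
        rw [Finset.sum_comm]
        exact Finset.sum_congr rfl (fun x _ => Finset.sum_comm)
    _ = ∑ x ∈ X, ∑ y ∈ X, (if x = y then q + 1 else 1) := by
        refine Finset.sum_congr rfl (fun x _ => Finset.sum_congr rfl (fun y _ => ?_))
        rw [← Finset.card_filter]
        by_cases hxy : x = y
        · subst hxy
          simp only [if_pos rfl]
          rw [← point_count x]
          congr 1
          ext L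
          simp
        · rw [if_neg hxy]
          exact pair_count hxy
    _ = X.card * (q + X.card) := by
        have : ∀ x ∈ X, ∑ y ∈ X, (if x = y then q + 1 else 1) = q + X.card := by
          intro x hx
          have e : ∀ y, (if x = y then q + 1 else 1) = (if x = y then q else 0) + 1 := by
            intro y; split_ifs <;> omega
          rw [Finset.sum_congr rfl (fun y _ => e y), Finset.sum_add_distrib,
            Finset.sum_ite_eq, if_pos hx, Finset.sum_const, smul_eq_mul, mul_one]
        rw [Finset.sum_congr rfl this, Finset.sum_const, smul_eq_mul]

end AuxStmt11

/-- The point-line incidence bound (expander mixing lemma) in the affine plane of prime power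
order `q`: for every set `X` of points and every set `Y` of affine lines, the number of
incidences `e(X,Y)` satisfies `|e(X,Y) - |X||Y|/q| ≤ √(q·|X|·|Y|)`. -/

theorem stmt11 (q : ℕ) (hq : IsPrimePow q)
    (F : Type) [Field F] [Fintype F] [DecidableEq F] (hF : Fintype.card F = q)
    (X : Finset (F × F)) (Y : Finset (Finset (F × F)))
    (hY : ∀ L ∈ Y, IsAffineLine (L : Set (F × F))) :
    |(∑ L ∈ Y, (X ∩ L).card : ℝ) - (X.card : ℝ) * Y.card / q| ≤
      Real.sqrt (q * X.card * Y.card) := by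
  classical
  subst hF
  set q : ℕ := Fintype.card F with hqdef
  have hq2 : 2 ≤ q := Fintype.one_lt_card
  have hq0 : (0:ℝ) < q := by positivity
  have hqne : (q:ℝ) ≠ 0 := ne_of_gt hq0
  set a : ℝ := (X.card : ℝ) with ha
  set n : ℝ := (Y.card : ℝ) with hn
  have ha0 : 0 ≤ a := by positivity
  have hn0 : 0 ≤ n := by positivity
  have hYsub : Y ⊆ linesOf F := fun L hL => mem_linesOf.2 (hY L hL)
  set f : Finset (F × F) → ℝ := fun L => ((X ∩ L).card : ℝ) - a / q with hf
  -- sums over all lines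
  have hS1 : ∑ L ∈ linesOf F, ((X ∩ L).card : ℝ) = a * (q + 1) := by
    rw [ha, ← Nat.cast_sum, sum_inter_card X]
    push_cast; ring
  have hS2 : ∑ L ∈ linesOf F, ((X ∩ L).card : ℝ) ^ 2 = a * (q + a) := by
    have := sum_inter_card_sq (F := F) X
    rw [ha]
    calc ∑ L ∈ linesOf F, ((X ∩ L).card : ℝ) ^ 2
        = ((∑ L ∈ linesOf F, (X ∩ L).card ^ 2 : ℕ) : ℝ) := by push_cast; rfl
      _ = ((X.card * (q + X.card) : ℕ) : ℝ) := by rw [this]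
      _ = (X.card : ℝ) * (q + X.card) := by push_cast; ring
  have hN : ((linesOf F).card : ℝ) = q ^ 2 + q := by
    rw [lines_card]; push_cast; ring
  -- second moment over all lines
  have hT : ∑ L ∈ linesOf F, f L ^ 2 = a * q - a ^ 2 / q := by
    have expand : ∀ L, f L ^ 2
        = ((X ∩ L).card : ℝ) ^ 2 - 2 * (a / q) * ((X ∩ L).card : ℝ) + (a / q) ^ 2 := by
      intro L; rw [hf]; ring
    rw [Finset.sum_congr rfl (fun L _ => expand L), Finset.sum_add_distrib,
      Finset.sum_sub_distrib, ← Finset.mul_sum, hS2, hS1, Finset.sum_const,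
      nsmul_eq_mul, hN]
    field_simp
    ring
  have hT' : ∑ L ∈ Y, f L ^ 2 ≤ a * q := by
    calc ∑ L ∈ Y, f L ^ 2 ≤ ∑ L ∈ linesOf F, f L ^ 2 :=
          Finset.sum_le_sum_of_subset_of_nonneg hYsub (fun L _ _ => sq_nonneg _)
      _ = a * q - a ^ 2 / q := hT
      _ ≤ a * q := by
          have : 0 ≤ a ^ 2 / q := by positivity
          linarith
  -- Cauchy–Schwarz
  have hCS : (∑ L ∈ Y, f L) ^ 2 ≤ q * a * n := by
    calc (∑ L ∈ Y, f L) ^ 2 ≤ Y.card * ∑ L ∈ Y, f L ^ 2 :=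
          sq_sum_le_card_mul_sum_sq
      _ ≤ n * (a * q) := by
          rw [← hn]
          exact mul_le_mul_of_nonneg_left hT' hn0
      _ = q * a * n := by ring
  -- rewrite the LHS
  have hLHS : (∑ L ∈ Y, ((X ∩ L).card : ℝ)) - a * n / q = ∑ L ∈ Y, f L := by
    rw [hf]
    rw [Finset.sum_sub_distrib, Finset.sum_const, nsmul_eq_mul, ← hn]
    ring
  rw [hLHS]
  have : |∑ L ∈ Y, f L| = Real.sqrt ((∑ L ∈ Y, f L) ^ 2) := (Real.sqrt_sq_eq_abs _).symm
  rw [this]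
  exact Real.sqrt_le_sqrt hCS
end

section
/- Let q be a prime power, F_q the finite field with q elements, and let S ⊆ F_q² be a cap with |S| = i ≥ 2 (no three points of S are collinear). Let X be the set of points of F_q² that do not lie on any affine line passing through two distinct points of S. Then |X| ≤ q³ / C(i,2), where C(i,2) = i(i−1)/2. -/
namespace Stmt12Aux

set_option linter.unusedSectionVars false
open Finset



variable {F : Type} [Field F] [DecidableEq F]

/-- Linear functional whose fibers are the lines of direction `d`. -/
def pf : Option F → F × F → F
  | none, p => p.1
  | some s, p => p.2 - s * p.1

/-- The direction of the line through two points. -/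
def dir (a b : F × F) : Option F :=
  if a.1 = b.1 then none else some ((a.2 - b.2) / (a.1 - b.1))

lemma pf_dir (a b : F × F) : pf (dir a b) a = pf (dir a b) b := by
  unfold dir
  by_cases h : a.1 = b.1
  · simp [pf, h]
  · have h' : a.1 - b.1 ≠ 0 := sub_ne_zero.mpr h
    simp only [if_neg h, pf]
    field_simp
    ring

lemma dir_unique {a b : F × F} (hab : a ≠ b) {d d' : Option F}
    (h : pf d a = pf d b) (h' : pf d' a = pf d' b) : d = d' := by
  have hne : ¬(a.1 = b.1 ∧ a.2 = b.2) := fun ⟨h1, h2⟩ => hab (Prod.ext h1 h2)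
  match d, d' with
  | none, none => rfl
  | none, some s =>
    simp only [pf] at h h'
    exact absurd ⟨h, by linear_combination h' + s * h⟩ hne
  | some s, none =>
    simp only [pf] at h h'
    exact absurd ⟨h', by linear_combination h + s * h'⟩ hne
  | some s, some s' =>
    simp only [pf] at h h'
    have key : (s' - s) * (a.1 - b.1) = 0 := by linear_combination h - h'
    rcases mul_eq_zero.mp key with hk | hk
    · rw [sub_eq_zero] at hk; rw [hk]
    · have h1 : a.1 = b.1 := by linear_combination hk
      exact absurd ⟨h1, by linear_combination h + s * h1⟩ hne

omit [DecidableEq F] in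
lemma collinear_of_pf {d : Option F} {x y z : F × F}
    (hy : pf d x = pf d y) (hz : pf d x = pf d z) :
    Collinear F ({x, y, z} : Set (F × F)) := by
  rw [collinear_iff_of_mem (Set.mem_insert x _)]
  cases d with
  | none =>
    refine ⟨(0, 1), fun p hp => ?_⟩
    simp only [Set.mem_insert_iff, Set.mem_singleton_iff] at hp
    simp only [pf] at hy hz
    refine ⟨p.2 - x.2, ?_⟩
    have h1 : p.1 = x.1 := by rcases hp with rfl | rfl | rfl <;> simp [hy.symm, hz.symm]
    have : (p.2 - x.2) • ((0 : F), (1 : F)) +ᵥ x = (x.1, p.2) := by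
      simp [Prod.ext_iff, Prod.smul_mk]
    rw [this, ← h1]
  | some s =>
    refine ⟨(1, s), fun p hp => ?_⟩
    simp only [Set.mem_insert_iff, Set.mem_singleton_iff] at hp
    simp only [pf] at hy hz
    refine ⟨p.1 - x.1, ?_⟩
    have h2 : p.2 - s * p.1 = x.2 - s * x.1 := by
      rcases hp with rfl | rfl | rfl
      · rfl
      · exact hy.symm
      · exact hz.symm
    have : (p.1 - x.1) • ((1 : F), s) +ᵥ x = (p.1, (p.1 - x.1) * s + x.2) := by
      simp [Prod.ext_iff, Prod.smul_mk]
    rw [this]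
    have : p.2 = (p.1 - x.1) * s + x.2 := by linear_combination h2
    rw [← this]



variable [Fintype F]

/-- Step 1: for one direction, sum of squared fiber sizes counts pairs with equal `pf d`. -/
lemma sum_sq_fibers (d : Option F) (X : Finset (F × F)) :
    ∑ c : F, ((X.filter fun p => pf d p = c).card) ^ 2
      = ((X ×ˢ X).filter fun pp => pf d pp.1 = pf d pp.2).card := by
  rw [Finset.card_eq_sum_card_fiberwise
    (f := fun pp : (F × F) × (F × F) => pf d pp.1) (t := univ) (fun x _ => mem_univ _)]
  refine Finset.sum_congr rfl fun c _ => ?_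
  have hset : (((X ×ˢ X).filter fun pp => pf d pp.1 = pf d pp.2).filter
      fun pp => pf d pp.1 = c)
      = (X.filter fun p => pf d p = c) ×ˢ (X.filter fun p => pf d p = c) := by
    ext ⟨p1, p2⟩
    simp only [mem_filter, mem_product]
    constructor
    · rintro ⟨⟨⟨h1, h2⟩, he⟩, hc⟩
      exact ⟨⟨h1, hc⟩, h2, he ▸ hc⟩
    · rintro ⟨⟨h1, hc1⟩, h2, hc2⟩
      exact ⟨⟨⟨h1, h2⟩, hc1.trans hc2.symm⟩, hc1⟩
  rw [hset, Finset.card_product, sq]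

/-- Step 2: summing over all directions. -/
lemma sum_sum_sq_fibers (q : ℕ) (hFq : Fintype.card F = q) (X : Finset (F × F)) :
    ∑ d : Option F, ∑ c : F, ((X.filter fun p => pf d p = c).card) ^ 2
      = X.card * (X.card + q) := by
  have h1 : ∀ d : Option F, ∑ c : F, ((X.filter fun p => pf d p = c).card) ^ 2
      = ∑ pp ∈ X ×ˢ X, if pf d pp.1 = pf d pp.2 then 1 else 0 := by
    intro d; rw [sum_sq_fibers, Finset.card_filter]
  simp only [h1]
  rw [Finset.sum_comm]
  have h2 : ∀ pp ∈ X ×ˢ X,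
      (∑ d : Option F, if pf d pp.1 = pf d pp.2 then 1 else 0)
      = if pp.1 = pp.2 then q + 1 else 1 := by
    rintro ⟨p1, p2⟩ _
    rw [← Finset.card_filter]
    by_cases hpp : p1 = p2
    · subst hpp
      simp [Fintype.card_option, hFq]
    · rw [if_neg hpp]
      have : (univ.filter fun d : Option F => pf d p1 = pf d p2) = {dir p1 p2} := by
        ext d
        simp only [mem_filter, mem_univ, true_and, mem_singleton]
        constructor
        · intro h; exact dir_unique hpp h (pf_dir p1 p2)
        · rintro rfl; exact pf_dir p1 p2
      rw [this, card_singleton]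
  rw [Finset.sum_congr rfl h2]
  have h3 : ∀ pp : (F × F) × (F × F),
      (if pp.1 = pp.2 then q + 1 else 1) = 1 + if pp.1 = pp.2 then q else 0 := by
    intro pp; split <;> omega
  simp only [h3]
  have h4 : ((X ×ˢ X).filter fun pp => pp.1 = pp.2) = X.image fun p => (p, p) := by
    ext ⟨p1, p2⟩
    simp only [mem_filter, mem_product, mem_image, Prod.mk.injEq]
    constructor
    · rintro ⟨⟨h1, _⟩, rfl⟩; exact ⟨p1, h1, rfl, rfl⟩
    · rintro ⟨p, hp, rfl, rfl⟩; exact ⟨⟨hp, hp⟩, rfl⟩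
  have h5 : ∑ pp ∈ X ×ˢ X, (if pp.1 = pp.2 then q else 0) = q * X.card := by
    rw [← Finset.sum_filter, h4, Finset.sum_const,
      Finset.card_image_of_injective _ (fun p p' h => (Prod.mk.injEq _ _ _ _).mp h |>.1),
      smul_eq_mul, mul_comm]
  rw [Finset.sum_add_distrib, Finset.sum_const, Finset.card_product, h5, smul_eq_mul]
  ring

/-- Step 3: Cauchy–Schwarz with forbidden values. -/
lemma cs_step (q : ℕ) (hFq : Fintype.card F = q) (d : Option F)
    (X : Finset (F × F)) (V : Finset F) (hXV : ∀ p ∈ X, pf d p ∉ V) :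
    X.card ^ 2 ≤ (q - V.card) * ∑ c : F, ((X.filter fun p => pf d p = c).card) ^ 2 := by
  have hsum : ∑ c ∈ univ \ V, (X.filter fun p => pf d p = c).card = X.card :=
    (Finset.card_eq_sum_card_fiberwise fun p hp => by
      simp [Finset.mem_sdiff, hXV p hp]).symm
  have hcs := sq_sum_le_card_mul_sum_sq
    (s := univ \ V) (f := fun c => ((X.filter fun p => pf d p = c).card : ℕ))
  rw [hsum] at hcs
  have hcard : (univ \ V).card = q - V.card := by
    rw [Finset.card_sdiff_of_subset (Finset.subset_univ V), Finset.card_univ, hFq]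
  rw [hcard] at hcs
  refine hcs.trans (Nat.mul_le_mul_left _ ?_)
  exact Finset.sum_le_sum_of_subset (Finset.subset_univ _)

/-- Main counting bound. -/
lemma count_main (q : ℕ) (hFq : Fintype.card F = q)
    (X : Finset (F × F)) (V : Option F → Finset F)
    (hXV : ∀ d : Option F, ∀ p ∈ X, pf d p ∉ V d) :
    X.card * (q + ∑ d : Option F, (V d).card) ≤ q ^ 3 := by
  set n := X.card with hn
  rcases Nat.eq_zero_or_pos n with h0 | hpos
  · simp [h0]
  -- per-direction inequality, multiplied by (q + m_d)
  have step : ∀ d : Option F, (q + (V d).card) * n ^ 2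
      ≤ q ^ 2 * ∑ c : F, ((X.filter fun p => pf d p = c).card) ^ 2 := by
    intro d
    have hv : (V d).card ≤ q := by
      rw [← hFq, ← Finset.card_univ]; exact Finset.card_le_card (Finset.subset_univ _)
    obtain ⟨k, hk⟩ := Nat.le.dest hv
    have hqk : q - (V d).card = k := by omega
    calc (q + (V d).card) * n ^ 2
        ≤ (q + (V d).card) * ((q - (V d).card) * ∑ c : F,
            ((X.filter fun p => pf d p = c).card) ^ 2) :=
          Nat.mul_le_mul_left _ (cs_step q hFq d X (V d) (hXV d))
      _ = ((q + (V d).card) * (q - (V d).card)) * ∑ c : F,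
            ((X.filter fun p => pf d p = c).card) ^ 2 := by ring
      _ ≤ q ^ 2 * ∑ c : F, ((X.filter fun p => pf d p = c).card) ^ 2 := by
          refine Nat.mul_le_mul_right _ ?_
          rw [hqk]
          nlinarith [hk]
  have total : ∑ d : Option F, (q + (V d).card) * n ^ 2
      ≤ q ^ 2 * (n * (n + q)) := by
    calc ∑ d : Option F, (q + (V d).card) * n ^ 2
        ≤ ∑ d : Option F, q ^ 2 * ∑ c : F, ((X.filter fun p => pf d p = c).card) ^ 2 :=
          Finset.sum_le_sum fun d _ => step d
      _ = q ^ 2 * ∑ d : Option F, ∑ c : F, ((X.filter fun p => pf d p = c).card) ^ 2 :=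
          (Finset.mul_sum _ _ _).symm
      _ = q ^ 2 * (n * (n + q)) := by rw [sum_sum_sq_fibers q hFq X]
  have hsum : ∑ d : Option F, (q + (V d).card) * n ^ 2
      = ((q + 1) * q + ∑ d : Option F, (V d).card) * n ^ 2 := by
    rw [← Finset.sum_mul, Finset.sum_add_distrib, Finset.sum_const, Finset.card_univ,
      Fintype.card_option, hFq, smul_eq_mul]
  rw [hsum] at total
  set m := ∑ d : Option F, (V d).card with hm
  -- ((q+1)q + m) n² ≤ q²n² + q³ n  ⟹  (q+m) n ≤ q³
  have h1 : (q + m) * n * n ≤ q ^ 3 * n := by nlinarith [total]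
  have := Nat.le_of_mul_le_mul_right h1 hpos
  nlinarith [this]


/-- Bad (secant) values of `pf d` determined by a set `S`. -/
def Vd (S : Finset (F × F)) (d : Option F) : Finset F :=
  (S.filter fun a => ∃ b ∈ S, b ≠ a ∧ pf d b = pf d a).image (pf d)

/-- There are at least `C(i,2)` secant lines. -/
lemma choose_le_sum_Vd (S : Finset (F × F))
    (hScap : ∀ a ∈ S, ∀ b ∈ S, ∀ c ∈ S, a ≠ b → a ≠ c → b ≠ c →
      ¬Collinear F ({a, b, c} : Set (F × F))) :
    (S.card).choose 2 ≤ ∑ d : Option F, (Vd S d).card := by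
  classical
  set L : Finset (Option F × F) := univ.filter (fun dc => dc.2 ∈ Vd S dc.1) with hL
  have hLcard : L.card = ∑ d : Option F, (Vd S d).card := by
    rw [Finset.card_eq_sum_card_fiberwise (f := Prod.fst) (t := univ) (fun x _ => mem_univ _)]
    refine Finset.sum_congr rfl fun d _ => ?_
    have he : (L.filter fun dc => dc.1 = d) = (Vd S d).image (fun c => (d, c)) := by
      ext ⟨d', c⟩
      simp only [hL, mem_filter, mem_univ, true_and, mem_image, Prod.mk.injEq]
      constructor
      · rintro ⟨hmem, rfl⟩; exact ⟨c, hmem, rfl, rfl⟩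
      · rintro ⟨c', hc', rfl, rfl⟩; exact ⟨hc', rfl⟩
    rw [he, Finset.card_image_of_injective _ (fun c c' h => ((Prod.mk.injEq _ _ _ _).mp h).2)]
  rw [← hLcard, ← Finset.card_powersetCard]
  -- the map sending a 2-subset to its secant line
  have hex : ∀ t ∈ S.powersetCard 2,
      ∃ ab : (F × F) × (F × F), ab.1 ∈ t ∧ ab.2 ∈ t ∧ ab.1 ≠ ab.2 := by
    intro t ht
    obtain ⟨hsub, hcard⟩ := Finset.mem_powersetCard.mp ht
    obtain ⟨x, y, hxy, rfl⟩ := Finset.card_eq_two.mp hcard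
    exact ⟨(x, y), by simp, by simp, hxy⟩
  set f : Finset (F × F) → Option F × F := fun t =>
    if h : ∃ ab : (F × F) × (F × F), ab.1 ∈ t ∧ ab.2 ∈ t ∧ ab.1 ≠ ab.2 then
      (dir h.choose.1 h.choose.2, pf (dir h.choose.1 h.choose.2) h.choose.1)
    else (none, 0) with hf
  -- basic facts about f on 2-subsets
  have hft : ∀ t ∈ S.powersetCard 2, ∃ a b : F × F, a ∈ S ∧ b ∈ S ∧ a ≠ b ∧ t = {a, b} ∧
      f t = (dir a b, pf (dir a b) a) := by
    intro t ht
    obtain ⟨hsub, hcard⟩ := Finset.mem_powersetCard.mp ht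
    have h := hex t ht
    obtain ⟨ha, hb, hab⟩ := h.choose_spec
    refine ⟨h.choose.1, h.choose.2, hsub ha, hsub hb, hab, ?_, by rw [hf]; simp [h]⟩
    refine (Finset.eq_of_subset_of_card_le ?_ ?_).symm
    · intro x hx
      simp only [Finset.mem_insert, Finset.mem_singleton] at hx
      rcases hx with rfl | rfl
      · exact ha
      · exact hb
    · rw [hcard, Finset.card_pair hab]
  have hmaps : ∀ t ∈ S.powersetCard 2, f t ∈ L := by
    intro t ht
    obtain ⟨a, b, haS, hbS, hab, -, hfeq⟩ := hft t ht
    rw [hfeq, hL]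
    simp only [mem_filter, mem_univ, true_and]
    exact Finset.mem_image.mpr ⟨a, Finset.mem_filter.mpr
      ⟨haS, b, hbS, hab.symm, (pf_dir a b).symm⟩, rfl⟩
  refine Finset.card_le_card_of_injOn f hmaps ?_
  intro t ht t' ht' hfe
  obtain ⟨a, b, haS, hbS, hab, rfl, hfeq⟩ := hft t ht
  obtain ⟨a', b', haS', hbS', hab', rfl, hfeq'⟩ := hft t' ht'
  rw [hfeq, hfeq'] at hfe
  have hd : dir a b = dir a' b' := congrArg Prod.fst hfe
  have hc : pf (dir a b) a = pf (dir a' b') a' := congrArg Prod.snd hfe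
  rw [← hd] at hc
  set d := dir a b with hdd
  have hpa : pf d a = pf d a' := hc
  have hpb : pf d a = pf d b := pf_dir a b
  have hpb' : pf d a = pf d b' := by
    rw [hpa, hd]; exact pf_dir a' b'
  by_contra hne
  have hkey : ∃ x, x ∈ ({a', b'} : Finset (F × F)) ∧ x ≠ a ∧ x ≠ b := by
    by_contra hcon
    push_neg at hcon
    have hsub : ({a', b'} : Finset (F × F)) ⊆ {a, b} := by
      intro x hx
      rcases eq_or_ne x a with rfl | hxa
      · simp
      · have hxb : x = b := (by simpa using hcon x hx : ¬x = a → x = b) hxa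
        simp [hxb]
    exact hne ((Finset.eq_of_subset_of_card_le hsub
      (by rw [Finset.card_pair hab, Finset.card_pair hab'])).symm)
  obtain ⟨x, hx, hxa, hxb⟩ := hkey
  have hxS : x ∈ S := by
    rcases Finset.mem_insert.mp hx with rfl | hx'
    · exact haS'
    · rw [Finset.mem_singleton.mp hx']; exact hbS'
  have hpx : pf d a = pf d x := by
    rcases Finset.mem_insert.mp hx with rfl | hx'
    · exact hpa
    · rw [Finset.mem_singleton.mp hx']; exact hpb'
  exact hScap a haS b hbS x hxS hab (Ne.symm hxa) (Ne.symm hxb)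
    (collinear_of_pf hpb hpx)


end Stmt12Aux

open Finset Stmt12Aux in
/-- Let `S` be a cap of size `i ≥ 2` in the affine plane `F²` over the field with `q`
elements (`q` a prime power), and let `X` be the set of points lying on no affine line
through two distinct points of `S` (i.e. points `p` with `{a, b, p}` not collinear for all
distinct `a, b ∈ S`).  Then `|X| ≤ q³ / C(i,2)`. -/
theorem stmt12 (q : ℕ) (hq : IsPrimePow q)
    (F : Type) [Field F] [Fintype F] (hF : Fintype.card F = q)
    (S : Finset (F × F)) (i : ℕ) (hi : 2 ≤ i) (hScard : S.card = i) (hScap : IsCap S) :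
    (({p : F × F | ∀ a ∈ S, ∀ b ∈ S, a ≠ b →
        ¬Collinear F ({a, b, p} : Set (F × F))} : Set (F × F)).ncard : ℝ) ≤
      (q : ℝ) ^ 3 / (i.choose 2) := by
  classical
  set X : Finset (F × F) := univ.filter
    (fun p => ∀ a ∈ S, ∀ b ∈ S, a ≠ b → ¬Collinear F ({a, b, p} : Set (F × F))) with hX
  have hsetX : {p : F × F | ∀ a ∈ S, ∀ b ∈ S, a ≠ b →
      ¬Collinear F ({a, b, p} : Set (F × F))} = ↑X := by
    ext p; simp [hX]
  rw [hsetX, Set.ncard_coe_finset]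
  have hXV : ∀ d : Option F, ∀ p ∈ X, pf d p ∉ Vd S d := by
    intro d p hp hmem
    rw [hX, mem_filter] at hp
    obtain ⟨-, hp⟩ := hp
    obtain ⟨a, hafil, hpa⟩ := Finset.mem_image.mp hmem
    obtain ⟨haS, b, hbS, hba, hpfba⟩ := Finset.mem_filter.mp hafil
    refine hp a haS b hbS hba.symm ?_
    rcases eq_or_ne p a with he1 | hpa'
    · rw [he1]
      have he : ({a, b, a} : Set (F × F)) = {a, b} := by ext x; simp; tauto
      rw [he]; exact collinear_pair F a b
    · rcases eq_or_ne p b with he2 | hpb'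
      · rw [he2]
        have he : ({a, b, b} : Set (F × F)) = {a, b} := by ext x; simp
        rw [he]; exact collinear_pair F a b
      · exact collinear_of_pf (hpfba.symm) hpa
  have h1 := count_main q hF X (Vd S) hXV
  have h2 := choose_le_sum_Vd S hScap
  have h3 : X.card * (i.choose 2) ≤ q ^ 3 := by
    rw [← hScard]
    exact le_trans (Nat.mul_le_mul_left _ (h2.trans (Nat.le_add_left _ q))) h1
  have hC : (0 : ℝ) < (i.choose 2 : ℝ) := by exact_mod_cast Nat.choose_pos hi
  rw [le_div_iff₀ hC]
  exact_mod_cast h3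
end

section
/- Let q be a prime power and F_q the finite field with q elements. For every integer t with 3 ≤ t ≤ q + 2, the number of caps of size t in the affine plane F_q² is at most (q⁴ / t!) · ∏_{i=2}^{t−1} min{ q², q³ / C(i,2) }, where C(i,2) = i(i−1)/2. -/
open Finset

noncomputable section

section Combinatorics

variable {α : Type*} [DecidableEq α]

theorem Finset.sum_sq_card_filter_mem_le {W : Finset α} {ℒ : Finset (Finset α)} {q : ℕ}
    (hq : ∀ ℓ ∈ ℒ, #ℓ = q) (hℒ : (ℒ : Set (Finset α)).Pairwise fun ℓ ℓ' => #(ℓ ∩ ℓ') ≤ 1) :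
    ∑ p ∈ W, #{ℓ ∈ ℒ | p ∈ ℓ} ^ 2 ≤ #ℒ * (q + #ℒ) := by
  have hrow : ∀ ℓ ∈ ℒ, ∑ ℓ' ∈ ℒ, #(ℓ ∩ ℓ') ≤ q + #ℒ := by
    intro ℓ hℓ
    rw [← add_sum_erase _ _ hℓ, inter_self, hq ℓ hℓ]
    gcongr
    calc ∑ ℓ' ∈ ℒ.erase ℓ, #(ℓ ∩ ℓ') ≤ ∑ ℓ' ∈ ℒ.erase ℓ, 1 :=
          sum_le_sum fun ℓ' hℓ' => hℒ hℓ (mem_of_mem_erase hℓ') (ne_of_mem_erase hℓ').symm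
      _ ≤ #ℒ := by simpa using card_erase_le
  calc ∑ p ∈ W, #{ℓ ∈ ℒ | p ∈ ℓ} ^ 2 = ∑ p ∈ W, #{x ∈ ℒ ×ˢ ℒ | p ∈ x.1 ∧ p ∈ x.2} := by
        refine sum_congr rfl fun p _ => ?_
        rw [filter_product (p := (p ∈ ·)) (q := (p ∈ ·)), card_product, sq]
    _ = ∑ x ∈ ℒ ×ˢ ℒ, #{p ∈ W | p ∈ x.1 ∧ p ∈ x.2} :=
        sum_card_bipartiteAbove_eq_sum_card_bipartiteBelow _
    _ ≤ ∑ x ∈ ℒ ×ˢ ℒ, #(x.1 ∩ x.2) :=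
        sum_le_sum fun x _ => card_le_card fun p hp => mem_inter.mpr (mem_filter.mp hp).2
    _ = ∑ ℓ ∈ ℒ, ∑ ℓ' ∈ ℒ, #(ℓ ∩ ℓ') := sum_product _ _ _
    _ ≤ ∑ ℓ ∈ ℒ, (q + #ℒ) := sum_le_sum hrow
    _ = #ℒ * (q + #ℒ) := by rw [sum_const, smul_eq_mul]

theorem Finset.card_mul_sq_le_of_pairwise_card_inter_le_one {W : Finset α}
    {ℒ : Finset (Finset α)} {q : ℕ} (hW : ∀ ℓ ∈ ℒ, ℓ ⊆ W) (hq : ∀ ℓ ∈ ℒ, #ℓ = q)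
    (hℒ : (ℒ : Set (Finset α)).Pairwise fun ℓ ℓ' => #(ℓ ∩ ℓ') ≤ 1) :
    #ℒ * q ^ 2 ≤ #W * (q + #ℒ) := by
  have hsum : ∑ p ∈ W, #{ℓ ∈ ℒ | p ∈ ℓ} = #ℒ * q := by
    calc ∑ p ∈ W, #{ℓ ∈ ℒ | p ∈ ℓ} = ∑ ℓ ∈ ℒ, #{p ∈ W | p ∈ ℓ} :=
          sum_card_bipartiteAbove_eq_sum_card_bipartiteBelow _
      _ = ∑ ℓ ∈ ℒ, q := sum_congr rfl fun ℓ hℓ => by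
          rw [filter_mem_eq_inter, inter_eq_right.mpr (hW ℓ hℓ), hq ℓ hℓ]
      _ = #ℒ * q := by rw [sum_const, smul_eq_mul]
  have hcs : #ℒ * (#ℒ * q ^ 2) ≤ #ℒ * (#W * (q + #ℒ)) :=
    calc #ℒ * (#ℒ * q ^ 2) = (∑ p ∈ W, #{ℓ ∈ ℒ | p ∈ ℓ}) ^ 2 := by rw [hsum]; ring
      _ ≤ #W * ∑ p ∈ W, #{ℓ ∈ ℒ | p ∈ ℓ} ^ 2 := sq_sum_le_card_mul_sum_sq
      _ ≤ #W * (#ℒ * (q + #ℒ)) := by gcongr; exact sum_sq_card_filter_mem_le hq hℒ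
      _ = #ℒ * (#W * (q + #ℒ)) := by ring
  rcases (#ℒ).eq_zero_or_pos with h0 | hpos
  · simp [h0]
  · exact Nat.le_of_mul_le_mul_left hcs hpos

theorem Finset.card_mul_card_le_of_pairwise_card_inter_le_one [Fintype α] {ℒ : Finset (Finset α)}
    {U : Finset α} {q : ℕ} (hα : Fintype.card α = q ^ 2) (hq : ∀ ℓ ∈ ℒ, #ℓ = q)
    (hℒ : (ℒ : Set (Finset α)).Pairwise fun ℓ ℓ' => #(ℓ ∩ ℓ') ≤ 1)
    (hU : ∀ ℓ ∈ ℒ, Disjoint ℓ U) : #ℒ * #U ≤ q ^ 3 := by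
  have key := card_mul_sq_le_of_pairwise_card_inter_le_one
    (fun ℓ hℓ => subset_compl_iff_disjoint_right.mpr (hU ℓ hℓ)) hq hℒ
  have hcompl : #Uᶜ + #U = q ^ 2 := by rw [card_compl_add_card, hα]
  calc #ℒ * #U ≤ #Uᶜ * q := by nlinarith
    _ ≤ q ^ 2 * q := by gcongr; omega
    _ = q ^ 3 := by ring

end Combinatorics

section Lines

variable (F : Type*) {V P : Type*} [Field F] [AddCommGroup V] [Module F V]
  [AddTorsor V P] [Fintype P] [DecidableEq P]

open Classical in
def affineSpanFinset (s : Finset P) : Finset P := {x | x ∈ affineSpan F (s : Set P)}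

variable {F}

@[simp]
theorem mem_affineSpanFinset_pair {a b x : P} :
    x ∈ affineSpanFinset F {a, b} ↔ x ∈ line[F, a, b] := by
  simp [affineSpanFinset]

theorem card_affineSpanFinset_pair [Fintype F] {a b : P} (hab : a ≠ b) :
    #(affineSpanFinset F {a, b}) = Fintype.card F := by
  have : affineSpanFinset F {a, b} = univ.image (AffineMap.lineMap (k := F) a b) := by
    ext x
    simp [mem_affineSpan_pair_iff_exists_lineMap_eq]
  rw [this, card_image_of_injective _ (AffineMap.lineMap_injective F hab), card_univ]

theorem card_inter_affineSpanFinset_pair_le_one {a b c d : P}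
    (hne : affineSpanFinset F {a, b} ≠ affineSpanFinset F {c, d}) :
    #(affineSpanFinset F {a, b} ∩ affineSpanFinset F {c, d}) ≤ 1 := by
  refine card_le_one.mpr fun x hx y hy => ?_
  by_contra hxy
  simp only [mem_inter, mem_affineSpanFinset_pair] at hx hy
  refine hne ?_
  ext z
  rw [mem_affineSpanFinset_pair, mem_affineSpanFinset_pair,
    ← affineSpan_pair_eq_of_mem_of_mem_of_ne hx.1 hy.1 hxy,
    affineSpan_pair_eq_of_mem_of_mem_of_ne hx.2 hy.2 hxy]

end Lines

section Caps

variable {F : Type*} [Field F] {S T : Finset (F × F)}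

theorem IsCap.subset (hT : IsCap T) (h : S ⊆ T) : IsCap S :=
  fun a ha b hb c hc => hT a (h ha) b (h hb) c (h hc)

variable [Fintype F]

open Classical in
variable (F) in
def capsOfCard (n : ℕ) : Finset (Finset (F × F)) := {S | IsCap S ∧ #S = n}

@[simp]
theorem mem_capsOfCard {n : ℕ} : S ∈ capsOfCard F n ↔ IsCap S ∧ #S = n := by
  simp [capsOfCard]

theorem card_capsOfCard_two_le :
    (#(capsOfCard F 2) : ℝ) ≤ (Fintype.card F : ℝ) ^ 4 / (Nat.factorial 2) := by
  have hsub : capsOfCard F 2 ⊆ univ.powersetCard 2 := fun S hS =>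
    mem_powersetCard.mpr ⟨subset_univ S, (mem_capsOfCard.mp hS).2⟩
  calc (#(capsOfCard F 2) : ℝ) ≤ (Fintype.card (F × F)).choose 2 := by
        exact_mod_cast (card_le_card hsub).trans_eq (by rw [card_powersetCard, card_univ])
    _ ≤ (Fintype.card (F × F) : ℝ) ^ 2 / (Nat.factorial 2) := Nat.choose_le_pow_div 2 _
    _ = (Fintype.card F : ℝ) ^ 4 / (Nat.factorial 2) := by rw [Fintype.card_prod]; push_cast; ring

variable [DecidableEq F]

theorem IsCap.inter_affineSpanFinset_eq (hS : IsCap S) {s : Finset (F × F)}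
    (hs : s ∈ S.powersetCard 2) : S ∩ affineSpanFinset F s = s := by
  obtain ⟨hsS, hs2⟩ := mem_powersetCard.mp hs
  obtain ⟨a, b, hab, rfl⟩ := card_eq_two.mp hs2
  refine subset_antisymm (fun c hc => ?_) (subset_inter hsS fun c hc => ?_)
  · obtain ⟨hcS, hc⟩ := mem_inter.mp hc
    rw [mem_affineSpanFinset_pair] at hc
    by_contra hcab
    simp only [mem_insert, mem_singleton, not_or] at hcab
    exact hS a (hsS (mem_insert_self a {b})) b (hsS (by simp)) c hcS hab (Ne.symm hcab.1)
      (Ne.symm hcab.2) (collinear_triple_of_mem_affineSpan_pair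
        (left_mem_affineSpan_pair F a b) (right_mem_affineSpan_pair F a b) hc)
  · simp only [mem_insert, mem_singleton] at hc
    rcases hc with rfl | rfl <;> simp [left_mem_affineSpan_pair, right_mem_affineSpan_pair]

open Classical in
def capExtensions (S : Finset (F × F)) : Finset (F × F) := {x | x ∉ S ∧ IsCap (insert x S)}

@[simp]
theorem mem_capExtensions {x : F × F} : x ∈ capExtensions S ↔ x ∉ S ∧ IsCap (insert x S) := by
  simp [capExtensions]

def secants (S : Finset (F × F)) : Finset (Finset (F × F)) :=
  (S.powersetCard 2).image (affineSpanFinset F)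

theorem exists_eq_affineSpanFinset_pair_of_mem_secants {ℓ : Finset (F × F)} (hℓ : ℓ ∈ secants S) :
    ∃ a b, a ≠ b ∧ ℓ = affineSpanFinset F {a, b} := by
  obtain ⟨s, hs, rfl⟩ := mem_image.mp hℓ
  obtain ⟨a, b, hab, rfl⟩ := card_eq_two.mp (mem_powersetCard.mp hs).2
  exact ⟨a, b, hab, rfl⟩

theorem IsCap.card_secants (hS : IsCap S) : #(secants S) = (#S).choose 2 := by
  rw [secants, card_image_of_injOn, card_powersetCard]
  intro s hs s' hs' heq
  rw [← hS.inter_affineSpanFinset_eq hs, ← hS.inter_affineSpanFinset_eq hs']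
  exact congrArg (S ∩ ·) heq

theorem disjoint_capExtensions_of_mem_secants {ℓ : Finset (F × F)}
    (hℓ : ℓ ∈ secants S) : Disjoint ℓ (capExtensions S) := by
  obtain ⟨s, hs, rfl⟩ := mem_image.mp hℓ
  refine disjoint_right.mpr fun x hx hxs => ?_
  rw [mem_capExtensions] at hx
  have hs' : s ∈ (insert x S).powersetCard 2 :=
    powersetCard_mono (subset_insert x S) hs
  have : x ∈ s := by
    rw [← hx.2.inter_affineSpanFinset_eq hs']
    exact mem_inter.mpr ⟨mem_insert_self x S, hxs⟩
  exact hx.1 ((mem_powersetCard.mp hs).1 this)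

theorem IsCap.card_capExtensions_mul_choose_two_le (hS : IsCap S) :
    #(capExtensions S) * (#S).choose 2 ≤ Fintype.card F ^ 3 := by
  rw [← hS.card_secants, mul_comm]
  refine card_mul_card_le_of_pairwise_card_inter_le_one (by rw [Fintype.card_prod, sq])
    (fun ℓ hℓ => ?_) (fun ℓ hℓ ℓ' hℓ' hne => ?_) fun _ => disjoint_capExtensions_of_mem_secants
  · obtain ⟨a, b, hab, rfl⟩ := exists_eq_affineSpanFinset_pair_of_mem_secants hℓ
    exact card_affineSpanFinset_pair hab
  · obtain ⟨a, b, -, rfl⟩ := exists_eq_affineSpanFinset_pair_of_mem_secants hℓ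
    obtain ⟨c, d, -, rfl⟩ := exists_eq_affineSpanFinset_pair_of_mem_secants hℓ'
    exact card_inter_affineSpanFinset_pair_le_one hne

theorem IsCap.card_capExtensions_le_min (hS : IsCap S) (hS2 : 2 ≤ #S) :
    (#(capExtensions S) : ℝ) ≤
      min ((Fintype.card F : ℝ) ^ 2) ((Fintype.card F : ℝ) ^ 3 / (#S).choose 2) := by
  refine le_min ?_ ?_
  · exact_mod_cast (card_le_univ _).trans_eq (by rw [Fintype.card_prod, sq])
  · rw [le_div_iff₀ (by exact_mod_cast Nat.choose_pos hS2)]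
    exact_mod_cast hS.card_capExtensions_mul_choose_two_le

theorem card_capsOfCard_succ_mul_le {n : ℕ} {B : ℝ}
    (hB : ∀ S ∈ capsOfCard F n, (#(capExtensions S) : ℝ) ≤ B) :
    (#(capsOfCard F (n + 1)) : ℝ) * (n + 1) ≤ #(capsOfCard F n) * B := by
  have := card_nsmul_le_card_nsmul (R := ℝ) (s := capsOfCard F (n + 1)) (t := capsOfCard F n)
    (fun T S => S ⊆ T) (m := n + 1) (n := B) (fun T hT => ?_) (fun S hS => ?_)
  · simpa only [nsmul_eq_mul, mul_comm] using this
  · obtain ⟨hT, hTn⟩ := mem_capsOfCard.mp hT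
    have hsub : T.image T.erase ⊆ (capsOfCard F n).bipartiteAbove (fun T S => S ⊆ T) T := by
      intro S hS
      obtain ⟨x, hx, rfl⟩ := mem_image.mp hS
      simp only [mem_bipartiteAbove, mem_capsOfCard]
      exact ⟨⟨hT.subset (erase_subset x T), by rw [card_erase_of_mem hx, hTn]; rfl⟩,
        erase_subset x T⟩
    have := card_le_card hsub
    rw [card_image_of_injOn T.erase_injOn, hTn] at this
    exact_mod_cast this
  · have hsub : (capsOfCard F (n + 1)).bipartiteBelow (fun T S => S ⊆ T) S ⊆
        (capExtensions S).image (insert · S) := by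
      intro T hT
      simp only [mem_bipartiteBelow, mem_capsOfCard] at hT hS
      obtain ⟨x, hx, rfl⟩ := exists_eq_insert_iff.mpr ⟨hT.2, by rw [hS.2, hT.1.2]⟩
      exact mem_image_of_mem _ (mem_capExtensions.mpr ⟨hx, hT.1.1⟩)
    exact (Nat.cast_le.mpr ((card_le_card hsub).trans card_image_le)).trans (hB S hS)

end Caps

theorem le_div_factorial_mul_prod_of_succ_mul_le {f b : ℕ → ℝ} {c : ℝ} (hb : ∀ n, 0 ≤ b n)
    (h2 : f 2 ≤ c / (Nat.factorial 2)) (hstep : ∀ n ≥ 2, f (n + 1) * (n + 1) ≤ f n * b n) :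
    ∀ m ≥ 2, f m ≤ c / (Nat.factorial m) * ∏ i ∈ Icc 2 (m - 1), b i := by
  intro m hm
  induction m, hm using Nat.le_induction with
  | base => simpa using h2
  | succ n hn ih =>
    obtain ⟨k, rfl⟩ : ∃ k, n = k + 1 := ⟨n - 1, by omega⟩
    have hpos : (0 : ℝ) < (k + 1 : ℕ) + 1 := by positivity
    calc f (k + 1 + 1) ≤ f (k + 1) * b (k + 1) / ((k + 1 : ℕ) + 1) :=
          (le_div_iff₀ hpos).mpr (hstep (k + 1) hn)
      _ ≤ c / (Nat.factorial (k + 1)) * (∏ i ∈ Icc 2 k, b i) * b (k + 1) / ((k + 1 : ℕ) + 1) := by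
          gcongr
          · exact hb _
          · simpa using ih
      _ = c / (Nat.factorial (k + 1 + 1)) * ∏ i ∈ Icc 2 (k + 1 + 1 - 1), b i := by
          rw [Nat.add_sub_cancel, prod_Icc_succ_top (by omega), Nat.factorial_succ (k + 1)]
          push_cast
          field_simp

end

theorem stmt13_general (q : ℕ)
    (F : Type) [Field F] [Fintype F] (hF : Fintype.card F = q)
    (t : ℕ) (ht3 : 3 ≤ t) :
    (Nat.card {S : Finset (F × F) // IsCap S ∧ S.card = t} : ℝ) ≤
      (q : ℝ) ^ 4 / (Nat.factorial t) *
        ∏ i ∈ Finset.Icc 2 (t - 1), min ((q : ℝ) ^ 2) ((q : ℝ) ^ 3 / (i.choose 2)) := by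
  classical
  subst hF
  have hcard : Nat.card {S : Finset (F × F) // IsCap S ∧ S.card = t} = #(capsOfCard F t) := by
    rw [Nat.card_eq_fintype_card, Fintype.card_subtype]
    rfl
  rw [hcard]
  refine le_div_factorial_mul_prod_of_succ_mul_le (f := fun n => #(capsOfCard F n))
    (fun n => le_min (by positivity) (by positivity)) card_capsOfCard_two_le
    (fun n hn => card_capsOfCard_succ_mul_le fun S hS => ?_) t (by omega)
  obtain ⟨hcap, rfl⟩ := mem_capsOfCard.mp hS
  exact hcap.card_capExtensions_le_min hn

/-- For a prime power `q`, the finite field `F` with `q` elements and `3 ≤ t ≤ q + 2`, the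
number of caps of size `t` in the affine plane `F²` is at most
`(q⁴ / t!) · ∏_{i=2}^{t-1} min(q², q³ / C(i,2))`. -/
theorem stmt13 (q : ℕ) (hq : IsPrimePow q)
    (F : Type) [Field F] [Fintype F] (hF : Fintype.card F = q)
    (t : ℕ) (ht3 : 3 ≤ t) (htq : t ≤ q + 2) :
    (Nat.card {S : Finset (F × F) // IsCap S ∧ S.card = t} : ℝ) ≤
      (q : ℝ) ^ 4 / (Nat.factorial t) *
        ∏ i ∈ Finset.Icc 2 (t - 1), min ((q : ℝ) ^ 2) ((q : ℝ) ^ 3 / (i.choose 2)) :=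
  stmt13_general q F hF t ht3
end

section
/- Let s ≥ 1 be an integer, F an s-uniform hypergraph on a finite vertex set V(F), and let (z_i)_{i ∈ V(F)} be independent random indicator variables with Pr[z_i = 1] = p for all i, where 0 < p < 1. Let F′ = {A ∈ F : z_i = 1 for all i ∈ A}. Suppose there exists α > 0 such that |F| · p^{s(1−α)} < 1. Then for every real c ≥ e·2^s·s·α, Pr[ τ(F′) > s²·(c/α)^{s+1} ] ≤ s² · |V(F)|^{s−1} · p^c. -/
/-- The cover number `τ` of a hypergraph: the least size of a vertex set meeting all edges. -/
noncomputable def coverNum {V : Type*} (F : Finset (Finset V)) : ℕ :=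
  sInf {n : ℕ | ∃ T : Finset V, T.card ≤ n ∧ ∀ A ∈ F, ∃ v ∈ A, v ∈ T}

attribute [local instance] Classical.propDecidable

/-!
A family of edges with `τ(F′) > s k` contains a matching of `k + 1` edges, since the vertices of a
maximal matching cover every edge.  A fixed matching of `k + 1` edges survives with probability
`p ^ (s (k + 1))`, and there are at most `|F| ^ (k + 1)` of them, so by the union bound
`Pr[τ(F′) > s k] ≤ (|F| p ^ s) ^ (k + 1) ≤ p ^ (s α (k + 1))`.  Taking `k = ⌊c / (s α)⌋` gives the
bound `p ^ c`, which is already smaller than the claimed one.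
-/

section CoverNum

variable {V : Type*} {F : Finset (Finset V)}

lemma coverNum_le_card {T : Finset V} (hT : ∀ A ∈ F, ∃ v ∈ A, v ∈ T) : coverNum F ≤ T.card :=
  Nat.sInf_le ⟨T, le_rfl, hT⟩

lemma coverNum_eq_zero_of_empty_mem (h : ∅ ∈ F) : coverNum F = 0 := by
  refine Nat.sInf_eq_zero.2 (Or.inr (Set.eq_empty_of_forall_notMem ?_))
  rintro n ⟨T, -, hT⟩
  obtain ⟨v, hv, -⟩ := hT ∅ h
  exact Finset.notMem_empty v hv

lemma exists_nonempty_mem_of_coverNum_ne_zero (h : coverNum F ≠ 0) : ∃ A ∈ F, A.Nonempty := by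
  by_contra! hF
  rcases F.eq_empty_or_nonempty with rfl | ⟨A, hA⟩
  · exact h (Nat.le_zero.1 (coverNum_le_card (T := ∅) (by simp)))
  · exact h (coverNum_eq_zero_of_empty_mem (hF A hA ▸ hA))

variable [DecidableEq V]

lemma exists_pairwiseDisjoint_maximal (hF : ∅ ∉ F) :
    ∃ M ⊆ F, (M : Set (Finset V)).PairwiseDisjoint id ∧ ∀ B ∈ F, ∃ A ∈ M, ¬Disjoint A B := by
  obtain ⟨M, hM, hmax⟩ := Finset.exists_max_image
    (F.powerset.filter fun M : Finset (Finset V) => (M : Set (Finset V)).PairwiseDisjoint id)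
    Finset.card ⟨∅, by simp⟩
  obtain ⟨hMF, hMdisj⟩ := Finset.mem_filter.1 hM
  refine ⟨M, Finset.mem_powerset.1 hMF, hMdisj, fun B hB => ?_⟩
  by_contra! hBM
  have hBnotM : B ∉ M := fun hBM' => hF ((Finset.disjoint_self_iff_empty B).1 (hBM B hBM') ▸ hB)
  have hinsert : insert B M ∈
      F.powerset.filter fun M : Finset (Finset V) => (M : Set (Finset V)).PairwiseDisjoint id := by
    refine Finset.mem_filter.2 ⟨Finset.mem_powerset.2 (Finset.insert_subset hB
      (Finset.mem_powerset.1 hMF)), ?_⟩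
    rw [Finset.coe_insert, Set.pairwiseDisjoint_insert]
    exact ⟨hMdisj, fun A hA _ => (hBM A hA).symm⟩
  have := hmax _ hinsert
  rw [Finset.card_insert_of_notMem hBnotM] at this
  omega

lemma coverNum_le_mul_card {s : ℕ} (hF : ∀ A ∈ F, A.card = s) {M : Finset (Finset V)}
    (hMF : M ⊆ F) (hM : ∀ B ∈ F, ∃ A ∈ M, ¬Disjoint A B) : coverNum F ≤ s * M.card := by
  calc coverNum F ≤ (M.biUnion id).card := coverNum_le_card fun B hB => by
        obtain ⟨A, hA, hAB⟩ := hM B hB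
        obtain ⟨v, hvA, hvB⟩ := Finset.not_disjoint_iff.1 hAB
        exact ⟨v, hvB, Finset.mem_biUnion.2 ⟨A, hA, hvA⟩⟩
    _ ≤ M.card * s := Finset.card_biUnion_le_card_mul _ _ _ fun A hA => (hF A (hMF hA)).le
    _ = s * M.card := Nat.mul_comm _ _

theorem exists_pairwiseDisjoint_card_eq_of_mul_lt_coverNum {s k : ℕ}
    (hF : ∀ A ∈ F, A.card = s) (h : s * k < coverNum F) :
    ∃ M ⊆ F, M.card = k + 1 ∧ (M : Set (Finset V)).PairwiseDisjoint id := by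
  have hempty : ∅ ∉ F := fun h' => by
    rw [coverNum_eq_zero_of_empty_mem h'] at h; omega
  obtain ⟨M, hMF, hMdisj, hMmax⟩ := exists_pairwiseDisjoint_maximal hempty
  have hk : k + 1 ≤ M.card := by
    by_contra! hlt
    have := coverNum_le_mul_card hF hMF hMmax
    have := Nat.mul_le_mul_left s (Nat.lt_succ_iff.1 hlt)
    omega
  obtain ⟨N, hNM, hN⟩ := Finset.exists_subset_card_eq hk
  exact ⟨N, hNM.trans hMF, hN, hMdisj.subset (by exact_mod_cast hNM)⟩

end CoverNum

lemma Finset.sum_biUnion_le_sum_sum {ι β M : Type*} [DecidableEq β] [AddCommMonoid M]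
    [PartialOrder M] [IsOrderedAddMonoid M] (t : Finset ι) (B : ι → Finset β) {f : β → M}
    (hf : ∀ b, 0 ≤ f b) : ∑ b ∈ t.biUnion B, f b ≤ ∑ j ∈ t, ∑ b ∈ B j, f b := by
  classical
  induction t using Finset.induction_on with
  | empty => simp
  | insert a t ha ih =>
    rw [Finset.biUnion_insert, Finset.sum_insert ha]
    calc ∑ b ∈ B a ∪ t.biUnion B, f b
        ≤ ∑ b ∈ B a ∪ t.biUnion B, f b + ∑ b ∈ B a ∩ t.biUnion B, f b :=
          le_add_of_nonneg_right (Finset.sum_nonneg fun b _ => hf b)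
      _ = ∑ b ∈ B a, f b + ∑ b ∈ t.biUnion B, f b := Finset.sum_union_inter
      _ ≤ ∑ b ∈ B a, f b + ∑ j ∈ t, ∑ b ∈ B j, f b := add_le_add_right ih _

lemma exists_nat_mul_le_and_le_mul_succ {s : ℕ} (hs : 1 ≤ s) {a c : ℝ} (ha : 0 < a)
    (hc : 0 ≤ c) : ∃ k : ℕ, (s * k : ℝ) ≤ c / a ∧ c ≤ s * a * (k + 1) := by
  have hsa : 0 < (s : ℝ) * a := mul_pos (by exact_mod_cast hs) ha
  refine ⟨⌊c / (s * a)⌋₊, ?_, ?_⟩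
  · calc (s * ⌊c / (s * a)⌋₊ : ℝ) ≤ s * (c / (s * a)) :=
          mul_le_mul_of_nonneg_left (Nat.floor_le (by positivity)) (Nat.cast_nonneg s)
      _ = c / a := by field_simp
  · exact ((div_lt_iff₀' hsa).1 (Nat.lt_floor_add_one _)).le

lemma card_mul_pow_le_rpow {n : ℕ} {p α : ℝ} (hp0 : 0 < p) (s : ℕ)
    (hsparse : (n : ℝ) * p ^ ((s : ℝ) * (1 - α)) < 1) : n * p ^ s ≤ p ^ ((s : ℝ) * α) := by
  have hsplit : p ^ s = p ^ ((s : ℝ) * (1 - α)) * p ^ ((s : ℝ) * α) := by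
    rw [← Real.rpow_add hp0, ← Real.rpow_natCast]
    ring_nf
  rw [hsplit, ← mul_assoc]
  exact mul_le_of_le_one_left (Real.rpow_nonneg hp0.le _) hsparse.le

lemma le_sq_mul_pow_succ {s : ℕ} (hs : 1 ≤ s) {x : ℝ} (hx : 1 ≤ x) :
    x ≤ (s : ℝ) ^ 2 * x ^ (s + 1) :=
  calc x ≤ x ^ (s + 1) := le_self_pow₀ hx (Nat.succ_ne_zero s)
    _ ≤ (s : ℝ) ^ 2 * x ^ (s + 1) :=
      le_mul_of_one_le_left (by positivity) (one_le_pow₀ (by exact_mod_cast hs))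

section Bernoulli

variable {V : Type*} [Fintype V]

/-- The probability of `E` when every vertex `i` is kept (`ω i = true`) independently with
probability `p`. -/
noncomputable def bernoulliProb (p : ℝ) (E : Finset (V → Bool)) : ℝ :=
  ∑ ω ∈ E, ∏ i, if ω i then p else 1 - p

variable {p : ℝ}

lemma bernoulliWeight_nonneg (hp0 : 0 ≤ p) (hp1 : p ≤ 1) (ω : V → Bool) :
    0 ≤ ∏ i, if ω i then p else 1 - p :=
  Finset.prod_nonneg fun i _ => by split_ifs <;> linarith

lemma bernoulliProb_mono (hp0 : 0 ≤ p) (hp1 : p ≤ 1) {E E' : Finset (V → Bool)} (h : E ⊆ E') :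
    bernoulliProb p E ≤ bernoulliProb p E' :=
  Finset.sum_le_sum_of_subset_of_nonneg h fun ω _ _ => bernoulliWeight_nonneg hp0 hp1 ω

lemma bernoulliProb_biUnion_le {ι : Type*} (hp0 : 0 ≤ p) (hp1 : p ≤ 1) (t : Finset ι)
    (E : ι → Finset (V → Bool)) :
    bernoulliProb p (t.biUnion E) ≤ ∑ j ∈ t, bernoulliProb p (E j) :=
  Finset.sum_biUnion_le_sum_sum t E (bernoulliWeight_nonneg hp0 hp1)

variable [DecidableEq V]

def keptEdges (F : Finset (Finset V)) (ω : V → Bool) : Finset (Finset V) :=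
  F.filter fun A => ∀ i ∈ A, ω i = true

lemma mem_keptEdges {F : Finset (Finset V)} {ω : V → Bool} {A : Finset V} :
    A ∈ keptEdges F ω ↔ A ∈ F ∧ ∀ i ∈ A, ω i = true :=
  Finset.mem_filter

def allKept (U : Finset V) : Finset (V → Bool) :=
  Finset.univ.filter fun ω => ∀ i ∈ U, ω i = true

lemma bernoulliProb_allKept (p : ℝ) (U : Finset V) : bernoulliProb p (allKept U) = p ^ U.card := by
  have hsum : ∀ i, ∑ b : Bool, (if i ∈ U → b = true then (if b then p else 1 - p) else 0) =
      if i ∈ U then p else 1 := fun i => by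
    by_cases hi : i ∈ U <;> simp [hi]
  simp only [bernoulliProb, allKept, Finset.sum_filter, ← Fintype.prod_ite_zero]
  rw [← Fintype.prod_sum fun i (b : Bool) =>
      if i ∈ U → b = true then (if b then p else 1 - p) else 0,
    Fintype.prod_congr _ _ hsum, Finset.prod_ite_mem, Finset.univ_inter, Finset.prod_const]

theorem bernoulliProb_mul_lt_coverNum_le (hp0 : 0 ≤ p) (hp1 : p ≤ 1)
    {F : Finset (Finset V)} {s : ℕ} (hF : ∀ A ∈ F, A.card = s) (k : ℕ) :
    bernoulliProb p (Finset.univ.filter fun ω => s * k < coverNum (keptEdges F ω)) ≤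
      (F.card * p ^ s) ^ (k + 1) := by
  set matchings := (F.powersetCard (k + 1)).filter
    fun M : Finset (Finset V) => (M : Set (Finset V)).PairwiseDisjoint id
  have hcover : Finset.univ.filter (fun ω => s * k < coverNum (keptEdges F ω)) ⊆
      matchings.biUnion fun M => allKept (M.biUnion id) := by
    intro ω hω
    obtain ⟨M, hMF, hMcard, hMdisj⟩ := exists_pairwiseDisjoint_card_eq_of_mul_lt_coverNum
      (fun A hA => hF A (mem_keptEdges.1 hA).1) (Finset.mem_filter.1 hω).2
    refine Finset.mem_biUnion.2 ⟨M, ?_, ?_⟩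
    · exact Finset.mem_filter.2 ⟨Finset.mem_powersetCard.2
        ⟨hMF.trans (Finset.filter_subset _ _), hMcard⟩, hMdisj⟩
    · refine Finset.mem_filter.2 ⟨Finset.mem_univ _, fun i hi => ?_⟩
      obtain ⟨A, hA, hiA⟩ := Finset.mem_biUnion.1 hi
      exact (mem_keptEdges.1 (hMF hA)).2 i hiA
  have hsurvive :
      ∀ M ∈ matchings, bernoulliProb p (allKept (M.biUnion id)) = p ^ (s * (k + 1)) := by
    intro M hM
    obtain ⟨hMF, hMdisj⟩ := Finset.mem_filter.1 hM
    obtain ⟨hMF, hMcard⟩ := Finset.mem_powersetCard.1 hMF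
    rw [bernoulliProb_allKept, Finset.card_biUnion hMdisj,
      Finset.sum_congr rfl fun A hA => (hF A (hMF hA) : (id A).card = s), Finset.sum_const,
      smul_eq_mul, hMcard, Nat.mul_comm]
  have hcount : (matchings.card : ℝ) ≤ F.card ^ (k + 1) := by
    calc (matchings.card : ℝ) ≤ (F.powersetCard (k + 1)).card := by
          exact_mod_cast Finset.card_filter_le _ _
      _ = F.card.choose (k + 1) := by rw [Finset.card_powersetCard]
      _ ≤ F.card ^ (k + 1) := by exact_mod_cast Nat.choose_le_pow _ _
  calc _ ≤ bernoulliProb p (matchings.biUnion fun M => allKept (M.biUnion id)) :=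
        bernoulliProb_mono hp0 hp1 hcover
    _ ≤ ∑ M ∈ matchings, bernoulliProb p (allKept (M.biUnion id)) :=
        bernoulliProb_biUnion_le hp0 hp1 _ _
    _ = matchings.card * p ^ (s * (k + 1)) := by
        rw [Finset.sum_congr rfl hsurvive, Finset.sum_const, nsmul_eq_mul]
    _ ≤ F.card ^ (k + 1) * p ^ (s * (k + 1)) := by gcongr
    _ = (F.card * p ^ s) ^ (k + 1) := by ring

theorem bernoulliProb_lt_coverNum_le_rpow (hp0 : 0 < p) (hp1 : p ≤ 1)
    {F : Finset (Finset V)} {s : ℕ} (hs : 1 ≤ s) (hF : ∀ A ∈ F, A.card = s)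
    {α c t : ℝ} (hα : 0 < α) (hsparse : (F.card : ℝ) * p ^ ((s : ℝ) * (1 - α)) < 1)
    (hc : 0 ≤ c) (ht : c / α ≤ t) :
    bernoulliProb p (Finset.univ.filter fun ω => t < (coverNum (keptEdges F ω) : ℝ)) ≤ p ^ c := by
  obtain ⟨k, hkα, hck⟩ := exists_nat_mul_le_and_le_mul_succ hs hα hc
  calc _ ≤ bernoulliProb p (Finset.univ.filter fun ω => s * k < coverNum (keptEdges F ω)) :=
        bernoulliProb_mono hp0.le hp1 <| Finset.monotone_filter_right _ fun ω _ h => by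
          exact_mod_cast (hkα.trans ht).trans_lt h
    _ ≤ (F.card * p ^ s) ^ (k + 1) := bernoulliProb_mul_lt_coverNum_le hp0.le hp1 hF k
    _ ≤ (p ^ ((s : ℝ) * α)) ^ (k + 1) := by
        gcongr
        exact card_mul_pow_le_rpow hp0 s hsparse
    _ = p ^ ((s : ℝ) * α * (k + 1)) := by
        rw [← Real.rpow_natCast, ← Real.rpow_mul hp0.le]
        push_cast
        ring_nf
    _ ≤ p ^ c := Real.rpow_le_rpow_of_exponent_ge hp0 hp1 hck

end Bernoulli

theorem stmt17_general (s : ℕ) (V : Type) [Fintype V] [DecidableEq V]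
    (F : Finset (Finset V)) (hF : ∀ A ∈ F, A.card = s)
    (p : ℝ) (hp0 : 0 < p) (hp1 : p < 1)
    (α : ℝ) (hα : 0 < α)
    (hsparse : (F.card : ℝ) * p ^ ((s : ℝ) * (1 - α)) < 1)
    (c : ℝ) (hc : Real.exp 1 * 2 ^ s * s * α ≤ c) :
    ∑ ω ∈ Finset.univ.filter (fun ω : V → Bool =>
        (s : ℝ) ^ 2 * (c / α) ^ (s + 1) <
          (coverNum (F.filter fun A => ∀ i ∈ A, ω i = true) : ℝ)),
      ∏ i : V, (if ω i then p else 1 - p) ≤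
    (s : ℝ) ^ 2 * (Fintype.card V : ℝ) ^ (s - 1) * p ^ c := by
  set t := (s : ℝ) ^ 2 * (c / α) ^ (s + 1)
  change bernoulliProb p (Finset.univ.filter fun ω => t < (coverNum (keptEdges F ω) : ℝ)) ≤ _
  rcases (Finset.univ.filter fun ω : V → Bool => t < (coverNum (keptEdges F ω) : ℝ)
    ).eq_empty_or_nonempty with hE | ⟨ω₀, hω₀⟩
  · rw [hE, bernoulliProb, Finset.sum_empty]
    positivity
  have hc0 : 0 ≤ c := le_trans (mul_nonneg (by positivity) hα.le) hc
  have ht0 : 0 ≤ t := mul_nonneg (sq_nonneg _) (pow_nonneg (div_nonneg hc0 hα.le) _)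
  have hτ : coverNum (keptEdges F ω₀) ≠ 0 :=
    Nat.cast_ne_zero.1 (ht0.trans_lt (Finset.mem_filter.1 hω₀).2).ne'
  obtain ⟨A, hA, v, hvA⟩ := exists_nonempty_mem_of_coverNum_ne_zero hτ
  have hs : 1 ≤ s := hF A (mem_keptEdges.1 hA).1 ▸ Finset.card_pos.2 ⟨v, hvA⟩
  have hV : 1 ≤ Fintype.card V := Fintype.card_pos_iff.2 ⟨v⟩
  have hcα : 1 ≤ c / α := by
    refine (one_le_div hα).2 (le_trans (le_mul_of_one_le_left hα.le ?_) hc)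
    exact one_le_mul_of_one_le_of_one_le
      (one_le_mul_of_one_le_of_one_le (Real.one_le_exp zero_le_one) (one_le_pow₀ one_le_two))
      (by exact_mod_cast hs)
  calc _ ≤ p ^ c := bernoulliProb_lt_coverNum_le_rpow hp0 hp1.le hs hF hα hsparse hc0
        (le_sq_mul_pow_succ hs hcα)
    _ ≤ (s : ℝ) ^ 2 * (Fintype.card V : ℝ) ^ (s - 1) * p ^ c :=
        le_mul_of_one_le_left (by positivity) <| one_le_mul_of_one_le_of_one_le
          (one_le_pow₀ (by exact_mod_cast hs)) (one_le_pow₀ (by exact_mod_cast hV))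

/-- Random sparsification lemma: let `F` be an `s`-uniform hypergraph on a finite vertex set
`V`, keep each vertex independently with probability `p` (a random outcome is `ω : V → Bool`,
occurring with probability `∏ i, if ω i then p else 1 - p`), and let `F′ = F′(ω)` consist of
the edges of `F` all of whose vertices are kept.  If `|F| · p^(s(1-α)) < 1` for some `α > 0`,
then for every `c ≥ e·2^s·s·α`,
`Pr[τ(F′) > s²·(c/α)^(s+1)] ≤ s² · |V|^(s-1) · p^c`. -/
theorem stmt17 (s : ℕ) (hs : 1 ≤ s) (V : Type) [Fintype V] [DecidableEq V]
    (F : Finset (Finset V)) (hF : ∀ A ∈ F, A.card = s)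
    (p : ℝ) (hp0 : 0 < p) (hp1 : p < 1)
    (α : ℝ) (hα : 0 < α)
    (hsparse : (F.card : ℝ) * p ^ ((s : ℝ) * (1 - α)) < 1)
    (c : ℝ) (hc : Real.exp 1 * 2 ^ s * s * α ≤ c) :
    ∑ ω ∈ Finset.univ.filter (fun ω : V → Bool =>
        (s : ℝ) ^ 2 * (c / α) ^ (s + 1) <
          (coverNum (F.filter fun A => ∀ i ∈ A, ω i = true) : ℝ)),
      ∏ i : V, (if ω i then p else 1 - p) ≤
    (s : ℝ) ^ 2 * (Fintype.card V : ℝ) ^ (s - 1) * p ^ c :=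
  stmt17_general s V F hF p hp0 hp1 α hα hsparse c hc
end
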